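/- arXiv:2110.06807 — 12 statements merged into one kernel-verified Lean document; each statement's English description precedes it below -/
import Mathlib

section
/- Let n ≥ 2 be an integer and let X be a set with at least two elements. Define d(x1,...,xn) = |{x1,...,xn}| − 1 (the number of distinct values among the arguments minus one). Then d is an n-distance on X whose best constant is 1/(n−1): for all x1,...,xn,z ∈ X one has d(x1,...,xn) ≤ (1/(n−1)) · Σ_{i=1}^n d(x1,...,xn)_i^z, and equality holds with a nonconstant tuple whenever x1 ≠ x2 and x2 = x3 = ⋯ = xn = z. -/
/-!
Write `S` for the set of values of `x` and `Sᵢ` for that of `x` with its `i`-th coordinate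
replaced by `z`; then `d x = #S - 1` and, since `z ∈ Sᵢ`, `d (xᵢᶻ) = #(Sᵢ \ {z})`. Every value
`v ∈ S \ {z}`, say `v = x j`, still lies in `Sᵢ` for each of the `n - 1` indices `i ≠ j`, so
double counting gives `(n - 1) (#S - 1) ≤ (n - 1) #(S \ {z}) ≤ ∑ᵢ #(Sᵢ \ {z})`. When `x` equals
`z` off one index `i₀`, replacing `x i` by `z` changes nothing for `i ≠ i₀` and makes `x`
constant for `i = i₀`, so the sum is exactly `(n - 1) d x`.
-/

open Finset Function

section DistinctValues

variable {ι X : Type*} [Fintype ι] [DecidableEq X]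

lemma card_image_univ_le_one_iff (x : ι → X) : #(univ.image x) ≤ 1 ↔ ∀ i j, x i = x j := by
  simp [card_le_one]

variable [DecidableEq ι]

lemma image_univ_comp_perm (x : ι → X) (σ : Equiv.Perm ι) :
    univ.image (x ∘ σ) = univ.image x := by
  rw [← image_image, image_univ_equiv]

lemma card_sub_one_le_card_filter_mem_image_update {x : ι → X} {z v : X}
    (hv : v ∈ univ.image x) (hvz : v ≠ z) :
    Fintype.card ι - 1 ≤ #{i | v ∈ (univ.image (update x i z)).erase z} := by
  obtain ⟨j, -, rfl⟩ := mem_image.mp hv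
  calc Fintype.card ι - 1 = #(univ.erase j) := by rw [card_erase_of_mem (mem_univ j), card_univ]
    _ ≤ _ := card_le_card fun i hi => by
      have hji : j ≠ i := (ne_of_mem_erase hi).symm
      simpa [hvz] using ⟨j, update_of_ne hji z x⟩

lemma card_sub_one_mul_card_erase_le_sum (x : ι → X) (z : X) :
    (Fintype.card ι - 1) * #((univ.image x).erase z) ≤
      ∑ i, #((univ.image (update x i z)).erase z) := by
  set r : X → ι → Prop := fun v i => v ∈ (univ.image (update x i z)).erase z
  calc (Fintype.card ι - 1) * #((univ.image x).erase z)
      = #((univ.image x).erase z) • (Fintype.card ι - 1) := by rw [smul_eq_mul, mul_comm]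
    _ ≤ ∑ v ∈ (univ.image x).erase z, #(univ.bipartiteAbove r v) :=
      card_nsmul_le_sum _ _ _ fun v hv =>
        card_sub_one_le_card_filter_mem_image_update (mem_of_mem_erase hv) (ne_of_mem_erase hv)
    _ = ∑ i, #(((univ.image x).erase z).bipartiteBelow r i) :=
      sum_card_bipartiteAbove_eq_sum_card_bipartiteBelow r
    _ ≤ _ := sum_le_sum fun i _ => card_le_card fun v hv => (mem_filter.mp hv).2

lemma sub_one_mul_card_image_sub_one_le_sum [Nonempty ι] (x : ι → X) (z : X) :
    ((Fintype.card ι : ℝ) - 1) * ((#(univ.image x) : ℝ) - 1) ≤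
      ∑ i, ((#(univ.image (update x i z)) : ℝ) - 1) := by
  have hterm : ∀ i, (#(univ.image (update x i z)) : ℝ) - 1 =
      #((univ.image (update x i z)).erase z) := fun i => by
    rw [card_erase_of_mem (mem_image.mpr ⟨i, mem_univ i, update_self i z x⟩),
      Nat.cast_pred (card_pos.mpr (univ_nonempty.image _))]
  have hx : (#(univ.image x) : ℝ) - 1 ≤ #((univ.image x).erase z) := by
    rw [← Nat.cast_pred (card_pos.mpr (univ_nonempty.image _))]
    exact_mod_cast pred_card_le_card_erase
  have hcount := card_sub_one_mul_card_erase_le_sum x z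
  rw [← Nat.cast_le (α := ℝ), Nat.cast_mul, Nat.cast_pred Fintype.card_pos, Nat.cast_sum]
    at hcount
  calc ((Fintype.card ι : ℝ) - 1) * ((#(univ.image x) : ℝ) - 1)
      ≤ ((Fintype.card ι : ℝ) - 1) * #((univ.image x).erase z) :=
        mul_le_mul_of_nonneg_left hx (sub_nonneg.mpr (Nat.one_le_cast.mpr Fintype.card_pos))
    _ ≤ _ := hcount
    _ = _ := by simp_rw [hterm]

lemma sum_card_image_update_sub_one_of_eq_off {x : ι → X} {z : X} {i₀ : ι}
    (hx : ∀ i ≠ i₀, x i = z) :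
    ∑ i, ((#(univ.image (update x i z)) : ℝ) - 1) =
      ((Fintype.card ι : ℝ) - 1) * ((#(univ.image x) : ℝ) - 1) := by
  have hconst : update x i₀ z = fun _ => z := funext fun j => by
    rcases eq_or_ne j i₀ with rfl | hj
    · exact update_self j z x
    · rw [update_of_ne hj, hx j hj]
  have hoff : ∀ i ∈ ({i₀}ᶜ : Finset ι), update x i z = x := fun i hi =>
    update_eq_self_iff.mpr (hx i (by simpa using hi)).symm
  have : Nonempty ι := ⟨i₀⟩
  rw [Fintype.sum_eq_add_sum_compl i₀, hconst, image_const univ_nonempty, sum_congr rfl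
    fun i hi => by rw [hoff i hi], sum_const, card_compl, card_singleton, card_singleton,
    nsmul_eq_mul, Nat.cast_pred Fintype.card_pos]
  simp

end DistinctValues

/-- The cardinality-based `n`-distance
`d(x₁,…,xₙ) = |{x₁,…,xₙ}| − 1` is an `n`-distance on any set `X` with at
least two elements, and its best constant is `1/(n−1)`: the simplex
inequality holds with constant `1/(n−1)`, and equality holds with a
nonconstant tuple whenever `x₁ ≠ x₂` and `x₂ = x₃ = ⋯ = xₙ = z`. -/
theorem cardinality_n_distance (n : ℕ) (hn : 2 ≤ n) (X : Type*) [DecidableEq X]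
    (d : (Fin n → X) → ℝ)
    (hd : ∀ x : Fin n → X, d x = (Finset.univ.image x).card - 1) :
    (∀ x : Fin n → X, 0 ≤ d x) ∧
    (∀ x : Fin n → X, d x = 0 ↔ ∀ i j : Fin n, x i = x j) ∧
    (∀ (x : Fin n → X) (σ : Equiv.Perm (Fin n)), d (x ∘ σ) = d x) ∧
    (∀ (x : Fin n → X) (z : X),
      d x ≤ (1 / ((n : ℝ) - 1)) * ∑ i : Fin n, d (Function.update x i z)) ∧
    (∀ (x : Fin n → X) (z : X),
      x ⟨0, by omega⟩ ≠ x ⟨1, by omega⟩ →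
      (∀ i : Fin n, i ≠ ⟨0, by omega⟩ → x i = z) →
      d x = (1 / ((n : ℝ) - 1)) * ∑ i : Fin n, d (Function.update x i z)) := by
  obtain rfl : d = fun x => (#(univ.image x) : ℝ) - 1 := funext hd
  have : Nonempty (Fin n) := ⟨⟨0, by omega⟩⟩
  have hcard (x : Fin n → X) : 1 ≤ #(univ.image x) := card_pos.mpr (univ_nonempty.image x)
  have hn₁ : (0 : ℝ) < n - 1 := by
    rw [sub_pos]
    exact_mod_cast hn
  refine ⟨fun x => ?_, fun x => ?_, fun x σ => ?_, fun x z => ?_, fun x z _ hz => ?_⟩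
  · simp [hcard x]
  · rw [sub_eq_zero, ← card_image_univ_le_one_iff, Nat.cast_eq_one]
    exact ⟨le_of_eq, fun h => le_antisymm h (hcard x)⟩
  · simp only [image_univ_comp_perm]
  · rw [one_div, inv_mul_eq_div, le_div_iff₀ hn₁, mul_comm]
    simpa using sub_one_mul_card_image_sub_one_le_sum x z
  · rw [sum_card_image_update_sub_one_of_eq_off hz, Fintype.card_fin, one_div,
      inv_mul_cancel_left₀ hn₁.ne']
end

section
/- Let n ≥ 2 be an integer, let X be a set with at least two elements, and let K > 0 be a real number. Suppose d : X^n → ℝ is nonnegative, symmetric under permutations of its arguments, satisfies d(x1,...,xn) = 0 if and only if x1 = ⋯ = xn, and satisfies d(x1,...,xn) ≤ K · Σ_{i=1}^n d(x1,...,xn)_i^z for all x1,...,xn,z ∈ X. Then K ≥ 1/(n−1). In other words, the best constant associated with any n-distance is at least 1/(n−1). -/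
/-- The best constant associated with any `n`-distance is at
least `1/(n−1)`: if `d` is nonnegative, symmetric, vanishes exactly on
constant tuples, and satisfies the simplex inequality with constant `K > 0`
on a set with at least two elements, then `K ≥ 1/(n−1)`. -/
theorem best_constant_lower_bound (n : ℕ) (hn : 2 ≤ n) (X : Type*)
    (hX : ∃ a b : X, a ≠ b) (K : ℝ) (hK : 0 < K)
    (d : (Fin n → X) → ℝ)
    (hnonneg : ∀ x : Fin n → X, 0 ≤ d x)
    (hzero : ∀ x : Fin n → X, d x = 0 ↔ ∀ i j : Fin n, x i = x j)
    (hsym : ∀ (x : Fin n → X) (σ : Equiv.Perm (Fin n)), d (x ∘ σ) = d x)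
    (hsimplex : ∀ (x : Fin n → X) (z : X),
      d x ≤ K * ∑ i : Fin n, d (Function.update x i z)) :
    1 / ((n : ℝ) - 1) ≤ K := by
  obtain ⟨a, b, hab⟩ := hX
  have h0n : (0 : ℕ) < n := by omega
  have h1n : (1 : ℕ) < n := by omega
  set i0 : Fin n := ⟨0, h0n⟩ with hi0
  set i1 : Fin n := ⟨1, h1n⟩ with hi1
  set x : Fin n → X := fun i => if i = i0 then b else a with hx
  have hx0 : x i0 = b := by simp [hx]
  have hx1 : x i1 = a := by simp [hx, hi0, hi1, Fin.ext_iff]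
  have hdx : 0 < d x := by
    rcases lt_or_eq_of_le (hnonneg x) with h | h
    · exact h
    · exfalso
      have := (hzero x).mp h.symm i0 i1
      rw [hx0, hx1] at this
      exact hab this.symm
  have hupd0 : d (Function.update x i0 a) = 0 := by
    rw [hzero]
    intro i j
    by_cases hi : i = i0 <;> by_cases hj : j = i0 <;>
      simp [Function.update_apply, hi, hj, hx]
  have hupdi : ∀ i : Fin n, i ≠ i0 → Function.update x i a = x := by
    intro i hi
    have : x i = a := by simp [hx, hi]
    conv_lhs => rw [← this]
    exact Function.update_eq_self i x
  have hsum : ∑ i : Fin n, d (Function.update x i a) = ((n : ℝ) - 1) * d x := by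
    have : ∀ i : Fin n, d (Function.update x i a)
        = d x - (if i = i0 then d x else 0) := by
      intro i
      by_cases hi : i = i0
      · simp [hi, hupd0]
      · rw [hupdi i hi]; simp [hi]
    rw [Finset.sum_congr rfl (fun i _ => this i), Finset.sum_sub_distrib]
    simp [Finset.sum_ite_eq', Finset.card_univ]
    ring
  have hmain := hsimplex x a
  rw [hsum] at hmain
  have hn1 : (0 : ℝ) < (n : ℝ) - 1 := by
    have : (2 : ℝ) ≤ (n : ℝ) := by exact_mod_cast hn
    linarith
  rw [div_le_iff₀ hn1]
  nlinarith [hmain, hdx, hn1]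
end

section
/- Let q ≥ 2 be an integer. For all points x1, x2, x3 ∈ ℝ^q, the diameter of a largest inner ball associated with x1, x2, x3 satisfies d(x1,x2,x3) ≥ (1/2) · max{|x1 − x2|, |x2 − x3|, |x3 − x1|}. -/
/-- The diameter of a largest inner (Euclidean) ball associated with the
points `x 0, …, x (n-1)` of `ℝ^q`: the largest distance `|xᵢ − xⱼ|` over
admissible pairs `(i,j)`, i.e. pairs such that no point of the tuple lies
in the open ball with the segment from `xᵢ` to `xⱼ` as a diameter. -/
noncomputable def innerBallDiam {q n : ℕ} (x : Fin n → EuclideanSpace ℝ (Fin q)) : ℝ :=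
  sSup {t : ℝ | ∃ i j : Fin n,
    (∀ k : Fin n, dist (x i) (x j) / 2 ≤ dist (x k) (midpoint ℝ (x i) (x j))) ∧
    t = dist (x i) (x j)}

open scoped RealInnerProductSpace

lemma mid_lemma {q : ℕ} (u v p : EuclideanSpace ℝ (Fin q))
    (hsq : dist u v ^ 2 ≤ dist p u ^ 2 + dist p v ^ 2) :
    dist u v / 2 ≤ dist p (midpoint ℝ u v) := by
  have h2 : (p - u) + (p - v) = (2:ℝ) • (p - midpoint ℝ u v) := by
    have hs : (2:ℝ) • ((2:ℝ)⁻¹ • (u + v)) = u + v := by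
      rw [smul_smul]; norm_num
    rw [midpoint_eq_smul_add, invOf_eq_inv, smul_sub, hs, two_smul]
    abel
  have e1 : ‖(p - u) + (p - v)‖ ^ 2 = ‖p - u‖ ^ 2 + 2 * ⟪p - u, p - v⟫ + ‖p - v‖ ^ 2 :=
    norm_add_sq_real _ _
  have e2 : ‖(p - v) - (p - u)‖ ^ 2 = ‖p - v‖ ^ 2 - 2 * ⟪p - v, p - u⟫ + ‖p - u‖ ^ 2 :=
    norm_sub_sq_real _ _
  have hvu : (p - v) - (p - u) = u - v := by abel
  have hsymm : ⟪p - v, p - u⟫ = ⟪p - u, p - v⟫ := real_inner_comm _ _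
  have e3 : ‖(2:ℝ) • (p - midpoint ℝ u v)‖ = 2 * ‖p - midpoint ℝ u v‖ := by
    rw [norm_smul]; norm_num
  rw [hvu, hsymm] at e2
  rw [h2, e3] at e1
  simp only [dist_eq_norm] at hsq ⊢
  have h1 : (0:ℝ) ≤ ‖u - v‖ := norm_nonneg _
  have h2' : (0:ℝ) ≤ ‖p - midpoint ℝ u v‖ := norm_nonneg _
  nlinarith [e1, e2, hsq, h1, h2']

lemma bdd_above_ball_set {q : ℕ} (x : Fin 3 → EuclideanSpace ℝ (Fin q)) :
    BddAbove {t : ℝ | ∃ i j : Fin 3,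
      (∀ k : Fin 3, dist (x i) (x j) / 2 ≤ dist (x k) (midpoint ℝ (x i) (x j))) ∧
      t = dist (x i) (x j)} := by
  refine ⟨dist (x 0) (x 1) + dist (x 1) (x 2) + dist (x 0) (x 2), ?_⟩
  rintro t ⟨i, j, -, rfl⟩
  have d01 := dist_nonneg (x := x 0) (y := x 1)
  have d12 := dist_nonneg (x := x 1) (y := x 2)
  have d02 := dist_nonneg (x := x 0) (y := x 2)
  have c10 : dist (x 1) (x 0) = dist (x 0) (x 1) := dist_comm _ _
  have c20 : dist (x 2) (x 0) = dist (x 0) (x 2) := dist_comm _ _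
  have c21 : dist (x 2) (x 1) = dist (x 1) (x 2) := dist_comm _ _
  fin_cases i <;> fin_cases j <;>
    simp only [Fin.zero_eta, Fin.mk_one, Fin.reduceFinMk, dist_self] <;> linarith

lemma branch_lemma {q : ℕ} (x : Fin 3 → EuclideanSpace ℝ (Fin q)) (i j k : Fin 3)
    (hcover : ∀ m : Fin 3, m = i ∨ m = j ∨ m = k)
    (hsq : dist (x i) (x j) ^ 2 ≤ dist (x k) (x i) ^ 2 + dist (x k) (x j) ^ 2) :
    dist (x i) (x j) ≤ innerBallDiam x := by
  apply le_csSup (bdd_above_ball_set x)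
  refine ⟨i, j, ?_, rfl⟩
  intro m
  rcases hcover m with h | h | h
  · rw [h, dist_left_midpoint]
    simp [div_eq_inv_mul]
  · rw [h, midpoint_comm, dist_left_midpoint, dist_comm (x i) (x j)]
    simp [div_eq_inv_mul]
  · rw [h]; exact mid_lemma _ _ _ hsq

/-- For any three points of `ℝ^q` (`q ≥ 2`), the diameter of a
largest inner ball is at least half of the largest pairwise distance. -/
theorem innerBallDiam_ge_half_max_dist (q : ℕ) (hq : 2 ≤ q)
    (x₁ x₂ x₃ : EuclideanSpace ℝ (Fin q)) :
    (1 / 2) * max (max (dist x₁ x₂) (dist x₂ x₃)) (dist x₃ x₁) ≤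
      innerBallDiam ![x₁, x₂, x₃] := by
  have cover012 : ∀ m : Fin 3, m = (0:Fin 3) ∨ m = 1 ∨ m = 2 := by decide
  have cover120 : ∀ m : Fin 3, m = (1:Fin 3) ∨ m = 2 ∨ m = 0 := by decide
  have cover201 : ∀ m : Fin 3, m = (2:Fin 3) ∨ m = 0 ∨ m = 1 := by decide
  have tri1 : dist x₁ x₂ ≤ dist x₁ x₃ + dist x₃ x₂ := dist_triangle _ _ _
  have tri2 : dist x₂ x₃ ≤ dist x₂ x₁ + dist x₁ x₃ := dist_triangle _ _ _
  have tri3 : dist x₃ x₁ ≤ dist x₃ x₂ + dist x₂ x₁ := dist_triangle _ _ _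
  have c21 : dist x₂ x₁ = dist x₁ x₂ := dist_comm _ _
  have c32 : dist x₃ x₂ = dist x₂ x₃ := dist_comm _ _
  have c13 : dist x₁ x₃ = dist x₃ x₁ := dist_comm _ _
  have B01 : dist x₁ x₂ ^ 2 ≤ dist x₃ x₁ ^ 2 + dist x₃ x₂ ^ 2 →
      dist x₁ x₂ ≤ innerBallDiam ![x₁, x₂, x₃] := fun h =>
    branch_lemma ![x₁, x₂, x₃] 0 1 2 cover012 h
  have B12 : dist x₂ x₃ ^ 2 ≤ dist x₁ x₂ ^ 2 + dist x₁ x₃ ^ 2 →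
      dist x₂ x₃ ≤ innerBallDiam ![x₁, x₂, x₃] := fun h =>
    branch_lemma ![x₁, x₂, x₃] 1 2 0 cover120 h
  have B20 : dist x₃ x₁ ^ 2 ≤ dist x₂ x₃ ^ 2 + dist x₂ x₁ ^ 2 →
      dist x₃ x₁ ≤ innerBallDiam ![x₁, x₂, x₃] := fun h =>
    branch_lemma ![x₁, x₂, x₃] 2 0 1 cover201 h
  have ha0 : 0 ≤ dist x₁ x₂ := dist_nonneg
  have hb0 : 0 ≤ dist x₂ x₃ := dist_nonneg
  have hc0 : 0 ≤ dist x₃ x₁ := dist_nonneg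
  rcases le_total (dist x₁ x₂) (dist x₂ x₃) with hab | hab <;>
    rcases le_total (dist x₂ x₃) (dist x₃ x₁) with hbc | hbc <;>
      rcases le_total (dist x₁ x₂) (dist x₃ x₁) with hac | hac
  · refine le_trans ?_ (B12 (by nlinarith))
    have hm : max (max (dist x₁ x₂) (dist x₂ x₃)) (dist x₃ x₁) ≤ 2 * dist x₂ x₃ :=
      max_le (max_le (by linarith) (by linarith)) (by linarith)
    linarith
  · refine le_trans ?_ (B12 (by nlinarith))
    have hm : max (max (dist x₁ x₂) (dist x₂ x₃)) (dist x₃ x₁) ≤ 2 * dist x₂ x₃ :=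
      max_le (max_le (by linarith) (by linarith)) (by linarith)
    linarith
  · refine le_trans ?_ (B20 (by nlinarith))
    have hm : max (max (dist x₁ x₂) (dist x₂ x₃)) (dist x₃ x₁) ≤ 2 * dist x₃ x₁ :=
      max_le (max_le (by linarith) (by linarith)) (by linarith)
    linarith
  · refine le_trans ?_ (B01 (by nlinarith))
    have hm : max (max (dist x₁ x₂) (dist x₂ x₃)) (dist x₃ x₁) ≤ 2 * dist x₁ x₂ :=
      max_le (max_le (by linarith) (by linarith)) (by linarith)
    linarith
  · refine le_trans ?_ (B01 (by nlinarith))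
    have hm : max (max (dist x₁ x₂) (dist x₂ x₃)) (dist x₃ x₁) ≤ 2 * dist x₁ x₂ :=
      max_le (max_le (by linarith) (by linarith)) (by linarith)
    linarith
  · refine le_trans ?_ (B20 (by nlinarith))
    have hm : max (max (dist x₁ x₂) (dist x₂ x₃)) (dist x₃ x₁) ≤ 2 * dist x₃ x₁ :=
      max_le (max_le (by linarith) (by linarith)) (by linarith)
    linarith
  · refine le_trans ?_ (B12 (by nlinarith))
    have hm : max (max (dist x₁ x₂) (dist x₂ x₃)) (dist x₃ x₁) ≤ 2 * dist x₂ x₃ :=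
      max_le (max_le (by linarith) (by linarith)) (by linarith)
    linarith
  · refine le_trans ?_ (B12 (by nlinarith))
    have hm : max (max (dist x₁ x₂) (dist x₂ x₃)) (dist x₃ x₁) ≤ 2 * dist x₂ x₃ :=
      max_le (max_le (by linarith) (by linarith)) (by linarith)
    linarith
end

section
/- Let q ≥ 2 be an integer. The map d : (ℝ^q)^3 → ℝ carrying (x1,x2,x3) to the diameter of a largest inner ball associated with x1,x2,x3 is a 3-distance on ℝ^q: d(x1,x2,x3) = 0 if and only if x1 = x2 = x3, d is symmetric in its arguments, and d(x1,x2,x3) ≤ d(z,x2,x3) + d(x1,z,x3) + d(x1,x2,z) for all x1,x2,x3,z ∈ ℝ^q. -/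
variable {q n : ℕ}

local notation "E" => EuclideanSpace ℝ (Fin q)

def S (x : Fin n → E) : Set ℝ := {t : ℝ | ∃ i j : Fin n,
    (∀ k : Fin n, dist (x i) (x j) / 2 ≤ dist (x k) (midpoint ℝ (x i) (x j))) ∧
    t = dist (x i) (x j)}

lemma ibd_eq (x : Fin n → E) : innerBallDiam x = sSup (S x) := rfl

lemma bddAbove_S (x : Fin n → E) : BddAbove (S x) := by
  apply ((Set.finite_range (fun p : Fin n × Fin n => dist (x p.1) (x p.2))).bddAbove).mono
  rintro t ⟨i, j, -, rfl⟩
  exact ⟨(i, j), rfl⟩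

lemma zero_mem_S [NeZero n] (x : Fin n → E) : (0:ℝ) ∈ S x :=
  ⟨0, 0, by simpa using fun k => dist_nonneg, by simp⟩

lemma parallelogram (a b c : E) :
    2 * dist c a ^ 2 + 2 * dist c b ^ 2 = 4 * dist c (midpoint ℝ a b) ^ 2 + dist a b ^ 2 := by
  have hm : c - midpoint ℝ a b = (2:ℝ)⁻¹ • ((c - a) + (c - b)) := by
    rw [midpoint_eq_smul_add, invOf_eq_inv]
    module
  have h1 : dist c (midpoint ℝ a b) = ‖(c - a) + (c - b)‖ / 2 := by
    rw [dist_eq_norm, hm, norm_smul]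
    simp [norm_inv]
    ring
  have h2 : dist a b = ‖(c - a) - (c - b)‖ := by
    rw [dist_eq_norm']
    congr 1
    abel
  have hp := parallelogram_law_with_norm ℝ (c - a) (c - b)
  rw [dist_eq_norm, dist_eq_norm, h1, h2]
  nlinarith [norm_nonneg ((c-a)+(c-b)), norm_nonneg ((c-a)-(c-b))]

lemma adm_iff (a b c : E) :
    dist a b / 2 ≤ dist c (midpoint ℝ a b) ↔ dist a b ^ 2 ≤ dist c a ^ 2 + dist c b ^ 2 := by
  have hp := parallelogram a b c
  have hd : (0:ℝ) ≤ dist a b := dist_nonneg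
  have hm : (0:ℝ) ≤ dist c (midpoint ℝ a b) := dist_nonneg
  constructor
  · intro h
    nlinarith
  · intro h
    have h4 : (dist a b / 2) ^ 2 ≤ dist c (midpoint ℝ a b) ^ 2 := by nlinarith
    exact (abs_le_of_sq_le_sq' h4 hm).2

lemma le_ibd (x : Fin n → E) (i j : Fin n)
    (h : ∀ k, dist (x i) (x j) ^ 2 ≤ dist (x k) (x i) ^ 2 + dist (x k) (x j) ^ 2) :
    dist (x i) (x j) ≤ innerBallDiam x :=
  le_csSup (bddAbove_S x) ⟨i, j, fun k => (adm_iff _ _ _).mpr (h k), rfl⟩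

lemma dist_le_two_ibd (a b c : E) : dist a b ≤ 2 * innerBallDiam ![a,b,c] := by
  have hnn : (0:ℝ) ≤ innerBallDiam ![a,b,c] :=
    le_csSup (bddAbove_S _) (zero_mem_S _)
  by_cases h : dist a b ^ 2 ≤ dist c a ^ 2 + dist c b ^ 2
  · have h01 : dist a b ≤ innerBallDiam ![a,b,c] := by
      have := le_ibd ![a,b,c] 0 1 ?_
      · simpa using this
      · intro k
        fin_cases k <;> simp [dist_self] <;>
          nlinarith [dist_nonneg (x := a) (y := b), dist_comm a b, dist_comm c a,
            dist_comm c b, sq_nonneg (dist a b), sq_nonneg (dist c b), sq_nonneg (dist c a)]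
    linarith
  · push_neg at h
    have hac : dist a c ≤ innerBallDiam ![a,b,c] := by
      have := le_ibd ![a,b,c] 0 2 ?_
      · simpa using this
      · intro k
        fin_cases k <;> simp [dist_self] <;>
          nlinarith [dist_comm a b, dist_comm c a, dist_comm c b, dist_comm a c,
            sq_nonneg (dist b c), sq_nonneg (dist a c), sq_nonneg (dist a b),
            dist_nonneg (x:=a) (y:=b), dist_nonneg (x:=c) (y:=b), dist_nonneg (x:=c) (y:=a)]
    have hbc : dist b c ≤ innerBallDiam ![a,b,c] := by
      have := le_ibd ![a,b,c] 1 2 ?_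
      · simpa using this
      · intro k
        fin_cases k <;> simp [dist_self] <;>
          nlinarith [dist_comm a b, dist_comm c a, dist_comm c b, dist_comm b c,
            sq_nonneg (dist b c), sq_nonneg (dist a c), sq_nonneg (dist a b),
            dist_nonneg (x:=a) (y:=b), dist_nonneg (x:=c) (y:=b), dist_nonneg (x:=c) (y:=a)]
    have ht : dist a b ≤ dist a c + dist c b := dist_triangle a c b
    have := dist_comm c b
    linarith

lemma simplex_aux (a b c z : E) :
    dist a b ≤ innerBallDiam ![z,b,c] + innerBallDiam ![a,z,c] + innerBallDiam ![a,b,z] := by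
  have n1 : 0 ≤ innerBallDiam ![z,b,c] := le_csSup (bddAbove_S _) (zero_mem_S _)
  have n2 : 0 ≤ innerBallDiam ![a,z,c] := le_csSup (bddAbove_S _) (zero_mem_S _)
  by_cases h : dist a b ^ 2 ≤ dist z a ^ 2 + dist z b ^ 2
  · have h01 : dist a b ≤ innerBallDiam ![a,b,z] := by
      have := le_ibd ![a,b,z] 0 1 ?_
      · simpa using this
      · intro k
        fin_cases k <;> simp [dist_self] <;>
          nlinarith [dist_comm a b, dist_comm z a, dist_comm z b,
            sq_nonneg (dist a b), sq_nonneg (dist z a), sq_nonneg (dist z b),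
            dist_nonneg (x:=a) (y:=b)]
    linarith
  · push_neg at h
    have h1 : dist a z ≤ innerBallDiam ![a,b,z] := by
      have := le_ibd ![a,b,z] 0 2 ?_
      · simpa using this
      · intro k
        fin_cases k <;> simp [dist_self] <;>
          nlinarith [dist_comm a b, dist_comm z a, dist_comm z b, dist_comm a z,
            dist_comm b z, sq_nonneg (dist a b), sq_nonneg (dist z a), sq_nonneg (dist z b),
            dist_nonneg (x:=a) (y:=b), dist_nonneg (x:=z) (y:=a), dist_nonneg (x:=z) (y:=b)]
    have h2 : dist b z ≤ innerBallDiam ![a,b,z] := by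
      have := le_ibd ![a,b,z] 1 2 ?_
      · simpa using this
      · intro k
        fin_cases k <;> simp [dist_self] <;>
          nlinarith [dist_comm a b, dist_comm z a, dist_comm z b, dist_comm a z,
            dist_comm b z, sq_nonneg (dist a b), sq_nonneg (dist z a), sq_nonneg (dist z b),
            dist_nonneg (x:=a) (y:=b), dist_nonneg (x:=z) (y:=a), dist_nonneg (x:=z) (y:=b)]
    have h3 := dist_le_two_ibd z b c
    have h4 := dist_le_two_ibd a z c
    have ht : dist a b ≤ dist a z + dist z b := dist_triangle a z b
    have hc : dist z b = dist b z := dist_comm z b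
    linarith

lemma ibd_nonneg [NeZero n] (x : Fin n → E) : 0 ≤ innerBallDiam x :=
  le_csSup (bddAbove_S x) (zero_mem_S x)

lemma ibd_le [NeZero n] (x : Fin n → E) {B : ℝ}
    (h : ∀ i j, dist (x i) (x j) ≤ B) : innerBallDiam x ≤ B := by
  rw [ibd_eq]
  refine csSup_le ⟨0, zero_mem_S x⟩ ?_
  rintro t ⟨i, j, -, rfl⟩
  exact h i j

lemma ibd_comp (x : Fin n → E) (e : Fin n ≃ Fin n) :
    innerBallDiam (x ∘ e) = innerBallDiam x := by
  unfold innerBallDiam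
  congr 1
  ext t
  constructor
  · rintro ⟨i, j, h, rfl⟩
    exact ⟨e i, e j, fun k => by simpa using h (e.symm k), rfl⟩
  · rintro ⟨i, j, h, rfl⟩
    exact ⟨e.symm i, e.symm j, fun k => by simpa using h (e k), by simp⟩

lemma vec_swap (a b c : E) : ![a,b,c] ∘ (Equiv.swap (0:Fin 3) 1) = ![b,a,c] := by
  funext k
  fin_cases k <;> simp [Equiv.swap_apply_def]

lemma vec_rot (a b c : E) : ![a,b,c] ∘ (finRotate 3) = ![b,c,a] := by
  funext k
  fin_cases k <;> rfl

lemma ibd_swap (a b c : E) : innerBallDiam ![b,a,c] = innerBallDiam ![a,b,c] := by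
  rw [← vec_swap a b c, ibd_comp]

lemma ibd_rot (a b c : E) : innerBallDiam ![b,c,a] = innerBallDiam ![a,b,c] := by
  rw [← vec_rot a b c, ibd_comp]

lemma ibd_rot' (a b c : E) : innerBallDiam ![c,a,b] = innerBallDiam ![a,b,c] := by
  rw [ibd_rot b c a, ibd_rot a b c]

lemma ibd_swap23 (a b c : E) : innerBallDiam ![a,c,b] = innerBallDiam ![a,b,c] := by
  rw [ibd_rot b a c, ibd_swap a b c]

lemma ibd_swap13 (a b c : E) : innerBallDiam ![c,b,a] = innerBallDiam ![a,b,c] := by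
  rw [ibd_swap b c a, ibd_rot a b c]

/-- The map `(x₁,x₂,x₃) ↦` diameter of a largest inner ball is
a `3`-distance on `ℝ^q`: it vanishes exactly on constant triples, it is
symmetric, and it satisfies the simplex inequality. -/
theorem innerBallDiam_is_3_distance (q : ℕ) (hq : 2 ≤ q) :
    (∀ x₁ x₂ x₃ : EuclideanSpace ℝ (Fin q),
      innerBallDiam ![x₁, x₂, x₃] = 0 ↔ x₁ = x₂ ∧ x₂ = x₃) ∧
    (∀ x₁ x₂ x₃ : EuclideanSpace ℝ (Fin q),
      innerBallDiam ![x₁, x₂, x₃] = innerBallDiam ![x₂, x₁, x₃] ∧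
      innerBallDiam ![x₁, x₂, x₃] = innerBallDiam ![x₂, x₃, x₁]) ∧
    (∀ x₁ x₂ x₃ z : EuclideanSpace ℝ (Fin q),
      innerBallDiam ![x₁, x₂, x₃] ≤
        innerBallDiam ![z, x₂, x₃] + innerBallDiam ![x₁, z, x₃] +
          innerBallDiam ![x₁, x₂, z]) := by
  refine ⟨fun x₁ x₂ x₃ => ?_, fun x₁ x₂ x₃ => ⟨ibd_swap x₂ x₁ x₃, (ibd_rot x₁ x₂ x₃).symm⟩,
    fun x₁ x₂ x₃ z => ?_⟩
  · constructor
    · intro h0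
      have ha := dist_le_two_ibd x₁ x₂ x₃
      have hb := dist_le_two_ibd x₂ x₃ x₁
      rw [ibd_rot x₁ x₂ x₃] at hb
      rw [h0] at ha hb
      exact ⟨dist_le_zero.mp (by linarith), dist_le_zero.mp (by linarith)⟩
    · rintro ⟨rfl, rfl⟩
      refine le_antisymm (ibd_le _ ?_) (ibd_nonneg _)
      intro i j
      fin_cases i <;> fin_cases j <;> simp
  · have n1 : 0 ≤ innerBallDiam ![z, x₂, x₃] := ibd_nonneg _
    have n2 : 0 ≤ innerBallDiam ![x₁, z, x₃] := ibd_nonneg _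
    have n3 : 0 ≤ innerBallDiam ![x₁, x₂, z] := ibd_nonneg _
    apply ibd_le
    intro i j
    fin_cases i <;> fin_cases j
    · show dist x₁ x₁ ≤ _
      rw [dist_self]; linarith
    · show dist x₁ x₂ ≤ _
      exact simplex_aux x₁ x₂ x₃ z
    · show dist x₁ x₃ ≤ _
      have h := simplex_aux x₁ x₃ x₂ z
      rw [ibd_swap23 z x₂ x₃, ibd_swap23 x₁ x₂ z, ibd_swap23 x₁ z x₃] at h
      linarith
    · show dist x₂ x₁ ≤ _
      have h := simplex_aux x₂ x₁ x₃ z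
      rw [ibd_swap x₁ z x₃, ibd_swap z x₂ x₃, ibd_swap x₁ x₂ z] at h
      linarith
    · show dist x₂ x₂ ≤ _
      rw [dist_self]; linarith
    · show dist x₂ x₃ ≤ _
      have h := simplex_aux x₂ x₃ x₁ z
      rw [ibd_rot x₁ z x₃, ibd_rot x₁ x₂ z, ibd_rot z x₂ x₃] at h
      linarith
    · show dist x₃ x₁ ≤ _
      have h := simplex_aux x₃ x₁ x₂ z
      rw [ibd_rot' x₁ x₂ z, ibd_rot' z x₂ x₃, ibd_rot' x₁ z x₃] at h
      linarith
    · show dist x₃ x₂ ≤ _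
      have h := simplex_aux x₃ x₂ x₁ z
      rw [ibd_swap13 x₁ x₂ z, ibd_swap13 x₁ z x₃, ibd_swap13 z x₂ x₃] at h
      linarith
    · show dist x₃ x₃ ≤ _
      rw [dist_self]; linarith
end

section
/- Let q ≥ 2 and n ≥ 2 be integers and let x1,...,xn ∈ ℝ^q. Let V = {x1,...,xn} (the finite set of these points) and let T be a connected simple graph on the vertex set V whose total Euclidean edge length Σ_{{u,v} ∈ E(T)} |u − v| is minimal among all connected simple graphs on V (a minimum spanning tree of the complete Euclidean graph on V). Then every edge {u,v} of T is a diameter of an inner ball associated with x1,...,xn; that is, for every edge {u,v} of T and every k ∈ {1,...,n}, |x_k − (u + v)/2| ≥ |u − v|/2. -/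
/-!
If a point `w` lay in the open ball with diameter `uv`, then by the triangle inequality through the
midpoint it would be strictly closer than `|u - v|` to both `u` and `v`. Removing the edge `uv`
from `T` leaves every vertex, in particular `w`, joined to `u` or to `v`; say to `u`. Then
replacing `uv` by `wv` gives a connected graph that is strictly shorter, contradicting minimality.
-/

open scoped Classical

/-- The total Euclidean edge length of a simple graph `G` on a finite vertex
set `V` of points of a metric space. -/
noncomputable def graphLength {E : Type*} [PseudoMetricSpace E] {V : Finset E}
    (G : SimpleGraph V) : ℝ :=
  ∑ e : Sym2 V,
    if e ∈ G.edgeSet then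
      Sym2.lift ⟨fun (u v : V) => dist (u : E) (v : E), fun u v => dist_comm _ _⟩ e
    else 0

open SimpleGraph hiding dist

section Midpoint

variable {E : Type*} [NormedAddCommGroup E] [NormedSpace ℝ E]

lemma dist_sub_half_le_dist_midpoint_left (u v w : E) :
    dist w u - dist u v / 2 ≤ dist w (midpoint ℝ u v) := by
  have h := dist_triangle w (midpoint ℝ u v) u
  rw [dist_midpoint_left, Real.norm_two] at h
  linarith

lemma dist_sub_half_le_dist_midpoint_right (u v w : E) :
    dist w v - dist u v / 2 ≤ dist w (midpoint ℝ u v) := by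
  simpa only [midpoint_comm, dist_comm v u] using dist_sub_half_le_dist_midpoint_left v u w

end Midpoint

namespace SimpleGraph

variable {V : Type*} {G : SimpleGraph V}

lemma Connected.reachable_deleteEdges_left_or_right (hG : G.Connected) (u v w : V) :
    (G.deleteEdges {s(u, v)}).Reachable w u ∨ (G.deleteEdges {s(u, v)}).Reachable w v := by
  obtain ⟨p⟩ := hG.preconnected w u
  induction p with
  | nil => exact .inl .rfl
  | @cons a c u hac _ ih =>
    by_cases he : s(a, c) = s(u, v)
    · rcases Sym2.eq_iff.mp he with ⟨rfl, -⟩ | ⟨rfl, -⟩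
      exacts [.inl .rfl, .inr .rfl]
    · have hac' : (G.deleteEdges {s(u, v)}).Adj a c := by simp [hac, he]
      exact ih.imp hac'.reachable.trans hac'.reachable.trans

end SimpleGraph

section GraphLength

variable {E : Type*} [PseudoMetricSpace E] {V : Finset E}

noncomputable def edgeLength : Sym2 V → ℝ :=
  Sym2.lift ⟨fun u v => dist (u : E) (v : E), fun _ _ => dist_comm _ _⟩

@[simp]
lemma edgeLength_mk (u v : V) : edgeLength s(u, v) = dist (u : E) (v : E) := rfl

lemma edgeLength_nonneg (e : Sym2 V) : 0 ≤ edgeLength e := by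
  induction e with | h u v => exact dist_nonneg

lemma graphLength_eq_sum_edgeLength (G : SimpleGraph V) :
    graphLength G = ∑ e : Sym2 V, if e ∈ G.edgeSet then edgeLength e else 0 := rfl

lemma graphLength_le_add_of_edgeSet_subset_insert {G H : SimpleGraph V} {e : Sym2 V}
    (h : H.edgeSet ⊆ insert e G.edgeSet) : graphLength H ≤ graphLength G + edgeLength e := by
  rw [graphLength_eq_sum_edgeLength, graphLength_eq_sum_edgeLength]
  calc _ ≤ ∑ f : Sym2 V, ((if f ∈ G.edgeSet then edgeLength f else 0) +
          if f = e then edgeLength f else 0) := by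
        refine Finset.sum_le_sum fun f _ => ?_
        have := edgeLength_nonneg f
        have := @h f
        split_ifs <;> simp_all
    _ = _ := by simp [Finset.sum_add_distrib]

lemma graphLength_deleteEdges_add {G : SimpleGraph V} {e : Sym2 V} (he : e ∈ G.edgeSet) :
    graphLength (G.deleteEdges {e}) + edgeLength e = graphLength G := by
  rw [graphLength_eq_sum_edgeLength, graphLength_eq_sum_edgeLength]
  calc _ = ∑ f : Sym2 V, ((if f ∈ (G.deleteEdges {e}).edgeSet then edgeLength f else 0) +
          if f = e then edgeLength f else 0) := by simp [Finset.sum_add_distrib]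
    _ = _ := by
        refine Finset.sum_congr rfl fun f _ => ?_
        split_ifs <;> simp_all [edgeSet_deleteEdges]

/-- Exchanging the edge `uv` for `wv` keeps the graph connected as long as `w` stays joined
to `u` after `uv` is removed. -/
lemma exists_connected_graphLength_lt_of_exchange {G : SimpleGraph V} (hG : G.Connected)
    {u v w : V} (huv : G.Adj u v) (hwu : (G.deleteEdges {s(u, v)}).Reachable w u)
    (hlt : dist (w : E) v < dist (u : E) v) :
    ∃ H : SimpleGraph V, H.Connected ∧ graphLength H < graphLength G := by
  set G' := G.deleteEdges {s(u, v)}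
  have hwv : (G' ⊔ edge w v).Reachable w v := by
    by_cases h : w = v
    · exact h ▸ .rfl
    · exact Adj.reachable (by simp [edge_adj, h])
  have hv : ∀ a, (G' ⊔ edge w v).Reachable a v := fun a =>
    (hG.reachable_deleteEdges_left_or_right u v a).elim
      (fun hau => (hau.trans hwu.symm).mono le_sup_left |>.trans hwv)
      (fun hav => hav.mono le_sup_left)
  refine ⟨G' ⊔ edge w v,
    (connected_iff_exists_forall_reachable _).2 ⟨v, fun a => (hv a).symm⟩, ?_⟩
  have hle : graphLength (G' ⊔ edge w v) ≤ graphLength G' + edgeLength s(w, v) := by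
    refine graphLength_le_add_of_edgeSet_subset_insert fun f hf => ?_
    rw [edgeSet_sup] at hf
    rcases hf with hf | hf
    · exact .inr hf
    · exact .inl (edgeSet_edge_subset hf)
  have hdel := graphLength_deleteEdges_add ((mem_edgeSet G).2 huv)
  simp only [edgeLength_mk] at hle hdel
  linarith

lemma le_dist_or_le_dist_of_forall_graphLength_le {T : SimpleGraph V} (hT : T.Connected)
    (hmin : ∀ H : SimpleGraph V, H.Connected → graphLength T ≤ graphLength H)
    {u v : V} (huv : T.Adj u v) (w : V) :
    dist (u : E) v ≤ dist (w : E) v ∨ dist (u : E) v ≤ dist (w : E) u := by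
  by_contra! h
  obtain ⟨hv, hu⟩ := h
  have not_shorter : ¬ ∃ H : SimpleGraph V, H.Connected ∧ graphLength H < graphLength T :=
    fun ⟨H, hH, hlt⟩ => (hmin H hH).not_gt hlt
  rcases hT.reachable_deleteEdges_left_or_right u v w with hwu | hwv
  · exact not_shorter (exists_connected_graphLength_lt_of_exchange hT huv hwu hv)
  · rw [Sym2.eq_swap] at hwv
    rw [← dist_comm (v : E)] at hu
    exact not_shorter (exists_connected_graphLength_lt_of_exchange hT huv.symm hwv hu)

end GraphLength

theorem mst_edges_are_inner_ball_diameters_general (q n : ℕ)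
    (x : Fin n → EuclideanSpace ℝ (Fin q))
    (V : Finset (EuclideanSpace ℝ (Fin q))) (hV : V = Finset.univ.image x)
    (T : SimpleGraph V) (hT : T.Connected)
    (hmin : ∀ H : SimpleGraph V, H.Connected → graphLength T ≤ graphLength H) :
    ∀ u v : V, T.Adj u v → ∀ k : Fin n,
      dist (u : EuclideanSpace ℝ (Fin q)) (v : EuclideanSpace ℝ (Fin q)) / 2 ≤
        dist (x k) (midpoint ℝ (u : EuclideanSpace ℝ (Fin q)) (v : EuclideanSpace ℝ (Fin q))) := by
  intro u v huv k
  have hxk : x k ∈ V := hV ▸ Finset.mem_image_of_mem x (Finset.mem_univ k)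
  have hu := dist_sub_half_le_dist_midpoint_left (u : EuclideanSpace ℝ (Fin q)) v (x k)
  have hv := dist_sub_half_le_dist_midpoint_right (u : EuclideanSpace ℝ (Fin q)) v (x k)
  rcases le_dist_or_le_dist_of_forall_graphLength_le hT hmin huv ⟨x k, hxk⟩ with h | h <;>
    linarith

/-- Every edge of a minimum spanning tree of the complete
Euclidean graph on the points `x₁,…,xₙ` of `ℝ^q` is a diameter of an inner
ball associated with `x₁,…,xₙ`: no point `x k` lies in the open ball having
the edge as a diameter. -/
theorem mst_edges_are_inner_ball_diameters (q n : ℕ) (hq : 2 ≤ q) (hn : 2 ≤ n)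
    (x : Fin n → EuclideanSpace ℝ (Fin q))
    (V : Finset (EuclideanSpace ℝ (Fin q))) (hV : V = Finset.univ.image x)
    (T : SimpleGraph V) (hT : T.Connected)
    (hmin : ∀ H : SimpleGraph V, H.Connected → graphLength T ≤ graphLength H) :
    ∀ u v : V, T.Adj u v → ∀ k : Fin n,
      dist (u : EuclideanSpace ℝ (Fin q)) (v : EuclideanSpace ℝ (Fin q)) / 2 ≤
        dist (x k) (midpoint ℝ (u : EuclideanSpace ℝ (Fin q)) (v : EuclideanSpace ℝ (Fin q))) :=
  mst_edges_are_inner_ball_diameters_general q n x V hV T hT hmin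
end

section
/- Let q ≥ 2 and n ≥ 2 be integers. The map d : (ℝ^q)^n → ℝ carrying (x1,...,xn) to the diameter of a largest inner ball associated with x1,...,xn is an n-distance on ℝ^q: d(x1,...,xn) = 0 if and only if x1 = ⋯ = xn, d is symmetric in its arguments, and d(x1,...,xn) ≤ Σ_{i=1}^n d(x1,...,xn)_i^z for all x1,...,xn,z ∈ ℝ^q. -/
namespace InnerBallAux

variable {q n : ℕ}

/-- The defining set of `innerBallDiam`. -/
def IBset (x : Fin n → EuclideanSpace ℝ (Fin q)) : Set ℝ :=
  {t : ℝ | ∃ i j : Fin n,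
    (∀ k : Fin n, dist (x i) (x j) / 2 ≤ dist (x k) (midpoint ℝ (x i) (x j))) ∧
    t = dist (x i) (x j)}

lemma innerBallDiam_eq (x : Fin n → EuclideanSpace ℝ (Fin q)) :
    innerBallDiam x = sSup (IBset x) := rfl

lemma bddAbove_IBset (x : Fin n → EuclideanSpace ℝ (Fin q)) : BddAbove (IBset x) := by
  apply BddAbove.mono _
    ((Set.finite_range fun p : Fin n × Fin n => dist (x p.1) (x p.2)).bddAbove)
  rintro t ⟨i, j, -, rfl⟩
  exact ⟨(i, j), rfl⟩

lemma zero_mem_IBset (hn : 0 < n) (x : Fin n → EuclideanSpace ℝ (Fin q)) :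
    (0 : ℝ) ∈ IBset x := by
  refine ⟨⟨0, hn⟩, ⟨0, hn⟩, ?_, by simp⟩
  intro k
  simpa using dist_nonneg

lemma innerBallDiam_nonneg (hn : 0 < n) (x : Fin n → EuclideanSpace ℝ (Fin q)) :
    0 ≤ innerBallDiam x :=
  le_csSup (bddAbove_IBset x) (zero_mem_IBset hn x)

lemma dist_to_midpoint (u v : EuclideanSpace ℝ (Fin q)) :
    dist u (midpoint ℝ u v) = dist u v / 2 := by
  rw [dist_left_midpoint, show ‖(2 : ℝ)‖ = 2 from by norm_num]
  ring

/-- cut lemma: across any cut there is an admissible pair. -/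
lemma cut (x : Fin n → EuclideanSpace ℝ (Fin q)) {A : Finset (Fin n)} {i j : Fin n}
    (hi : i ∈ A) (hj : j ∉ A) :
    ∃ k ∈ A, ∃ l, l ∉ A ∧ dist (x k) (x l) ≤ innerBallDiam x := by
  obtain ⟨p, hp, hmin⟩ := (A ×ˢ Aᶜ).exists_min_image (fun p => dist (x p.1) (x p.2))
    ⟨(i, j), Finset.mem_product.mpr ⟨hi, Finset.mem_compl.mpr hj⟩⟩
  obtain ⟨k, l⟩ := p
  rw [Finset.mem_product, Finset.mem_compl] at hp
  refine ⟨k, hp.1, l, hp.2, ?_⟩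
  apply le_csSup (bddAbove_IBset x)
  refine ⟨k, l, ?_, rfl⟩
  intro m
  by_contra hcon
  push_neg at hcon
  have hmk : dist (x m) (x k) < dist (x k) (x l) := by
    calc dist (x m) (x k) ≤ dist (x m) (midpoint ℝ (x k) (x l))
          + dist (midpoint ℝ (x k) (x l)) (x k) := dist_triangle _ _ _
      _ < dist (x k) (x l) / 2 + dist (x k) (x l) / 2 := by
          have h2 : dist (midpoint ℝ (x k) (x l)) (x k) = dist (x k) (x l) / 2 := by
            rw [dist_comm]; exact dist_to_midpoint _ _
          rw [h2]
          exact add_lt_add_left hcon _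
      _ = dist (x k) (x l) := by ring
  have hml : dist (x m) (x l) < dist (x k) (x l) := by
    calc dist (x m) (x l) ≤ dist (x m) (midpoint ℝ (x k) (x l))
          + dist (midpoint ℝ (x k) (x l)) (x l) := dist_triangle _ _ _
      _ < dist (x k) (x l) / 2 + dist (x k) (x l) / 2 := by
          have h2 : dist (midpoint ℝ (x k) (x l)) (x l) = dist (x k) (x l) / 2 := by
            rw [midpoint_comm, dist_comm, dist_comm (x k) (x l)]
            exact dist_to_midpoint _ _
          rw [h2]
          exact add_lt_add_left hcon _
      _ = dist (x k) (x l) := by ring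
  by_cases hmA : m ∈ A
  · have := hmin (m, l) (Finset.mem_product.mpr ⟨hmA, Finset.mem_compl.mpr hp.2⟩)
    simp only at this
    exact absurd this (not_le.mpr hml)
  · have := hmin (k, m) (Finset.mem_product.mpr ⟨hp.1, Finset.mem_compl.mpr hmA⟩)
    simp only at this
    rw [dist_comm (x k) (x m)] at this
    exact absurd this (not_le.mpr hmk)

/-- Main connectivity lemma: any distance is at most `(n-1)` times the
largest admissible distance. -/
lemma dist_le_mul (hn : 0 < n) (x : Fin n → EuclideanSpace ℝ (Fin q)) (i j : Fin n) :
    dist (x i) (x j) ≤ ((n : ℝ) - 1) * innerBallDiam x := by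
  set r := innerBallDiam x with hrdef
  have hr0 : 0 ≤ r := innerBallDiam_nonneg hn x
  have key : ∀ m : ℕ, ∃ A : Finset (Fin n),
      (i ∈ A ∧ ∀ k ∈ A, dist (x i) (x k) ≤ ((A.card : ℝ) - 1) * r) ∧
      (j ∈ A ∨ m ≤ A.card) := by
    intro m
    induction m with
    | zero =>
        refine ⟨{i}, ⟨Finset.mem_singleton_self i, ?_⟩, Or.inr (Nat.zero_le _)⟩
        intro k hk
        rw [Finset.mem_singleton] at hk
        subst hk
        simp
    | succ m ih =>
        obtain ⟨A, ⟨hiA, hbound⟩, hor⟩ := ih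
        by_cases hjA : j ∈ A
        · exact ⟨A, ⟨hiA, hbound⟩, Or.inl hjA⟩
        · have hcard : m ≤ A.card := by
            rcases hor with h | h
            · exact absurd h hjA
            · exact h
          obtain ⟨k, hk, l, hl, hkl⟩ := cut x hiA hjA
          refine ⟨insert l A, ⟨Finset.mem_insert_of_mem hiA, ?_⟩, Or.inr ?_⟩
          · intro k' hk'
            rw [Finset.card_insert_of_notMem hl]
            rcases Finset.mem_insert.mp hk' with rfl | hk'A
            · calc dist (x i) (x k') ≤ dist (x i) (x k) + dist (x k) (x k') :=
                    dist_triangle _ _ _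
                _ ≤ ((A.card : ℝ) - 1) * r + r := add_le_add (hbound k hk) hkl
                _ = (((A.card + 1 : ℕ) : ℝ) - 1) * r := by push_cast; ring
            · refine (hbound k' hk'A).trans (mul_le_mul_of_nonneg_right ?_ hr0)
              push_cast
              linarith
          · rw [Finset.card_insert_of_notMem hl]
            omega
  obtain ⟨A, ⟨hiA, hbound⟩, hor⟩ := key n
  have hjA : j ∈ A := by
    rcases hor with h | hcard
    · exact h
    · have h1 : A.card ≤ n := by simpa using A.card_le_univ
      have h2 : A.card = Fintype.card (Fin n) := by
        simp only [Fintype.card_fin]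
        omega
      have : A = Finset.univ := Finset.eq_univ_of_card A h2
      rw [this]
      exact Finset.mem_univ j
  have h1 : A.card ≤ n := by simpa using A.card_le_univ
  calc dist (x i) (x j) ≤ ((A.card : ℝ) - 1) * r := hbound j hjA
    _ ≤ ((n : ℝ) - 1) * r := by
        apply mul_le_mul_of_nonneg_right _ hr0
        have : (A.card : ℝ) ≤ (n : ℝ) := by exact_mod_cast h1
        linarith

end InnerBallAux

open InnerBallAux in
/-- The map `(x₁,…,xₙ) ↦` diameter of a largest inner ball is
an `n`-distance on `ℝ^q`: it vanishes exactly on constant tuples, it is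
symmetric, and it satisfies the simplex inequality. -/
theorem innerBallDiam_is_n_distance (q n : ℕ) (hq : 2 ≤ q) (hn : 2 ≤ n) :
    (∀ x : Fin n → EuclideanSpace ℝ (Fin q),
      innerBallDiam x = 0 ↔ ∀ i j : Fin n, x i = x j) ∧
    (∀ (x : Fin n → EuclideanSpace ℝ (Fin q)) (σ : Equiv.Perm (Fin n)),
      innerBallDiam (x ∘ σ) = innerBallDiam x) ∧
    (∀ (x : Fin n → EuclideanSpace ℝ (Fin q)) (z : EuclideanSpace ℝ (Fin q)),
      innerBallDiam x ≤ ∑ i : Fin n, innerBallDiam (Function.update x i z)) := by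
  have hn0 : 0 < n := by omega
  refine ⟨?_, ?_, ?_⟩
  · -- identity of indiscernibles
    intro x
    constructor
    · intro h i j
      by_contra hne
      have h1 : 0 < dist (x i) (x j) := dist_pos.mpr hne
      have h2 := dist_le_mul hn0 x i j
      rw [h] at h2
      simp at h2
      rw [h2] at h1
      simp at h1
    · intro h
      refine le_antisymm ?_ (innerBallDiam_nonneg hn0 x)
      apply csSup_le ⟨0, zero_mem_IBset hn0 x⟩
      rintro t ⟨i, j, -, rfl⟩
      simp [h i j]
  · -- symmetry
    intro x σ
    rw [innerBallDiam_eq, innerBallDiam_eq]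
    congr 1
    ext t
    constructor
    · rintro ⟨i, j, hadm, rfl⟩
      exact ⟨σ i, σ j, fun k => by simpa using hadm (σ.symm k), rfl⟩
    · rintro ⟨i, j, hadm, rfl⟩
      refine ⟨σ.symm i, σ.symm j, fun k => by simpa using hadm (σ k), by simp⟩
  · -- simplex inequality
    intro x z
    rw [innerBallDiam_eq]
    apply csSup_le ⟨0, zero_mem_IBset hn0 x⟩
    rintro t ⟨a, b, -, rfl⟩
    have hDnonneg : ∀ i : Fin n, 0 ≤ innerBallDiam (Function.update x i z) :=
      fun i => innerBallDiam_nonneg hn0 _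
    by_cases hab : a = b
    · subst hab
      simp only [dist_self]
      exact Finset.sum_nonneg fun i _ => hDnonneg i
    -- lower bounds on the terms
    have hA : dist z (x b) ≤ ((n : ℝ) - 1) * innerBallDiam (Function.update x a z) := by
      have := dist_le_mul hn0 (Function.update x a z) a b
      rwa [Function.update_self, Function.update_of_ne (Ne.symm hab)] at this
    have hB : dist (x a) z ≤ ((n : ℝ) - 1) * innerBallDiam (Function.update x b z) := by
      have := dist_le_mul hn0 (Function.update x b z) a b
      rwa [Function.update_self, Function.update_of_ne hab] at this
    have hC : ∀ i : Fin n, i ≠ a → i ≠ b →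
        dist (x a) (x b) ≤ ((n : ℝ) - 1) * innerBallDiam (Function.update x i z) := by
      intro i hia hib
      have := dist_le_mul hn0 (Function.update x i z) a b
      rwa [Function.update_of_ne (Ne.symm hia), Function.update_of_ne (Ne.symm hib)] at this
    set D : Fin n → ℝ := fun i => innerBallDiam (Function.update x i z) with hD
    have hbmem : b ∈ Finset.univ.erase a := Finset.mem_erase.mpr ⟨Ne.symm hab, Finset.mem_univ b⟩
    -- split the sum
    have hsplit : ∑ i : Fin n, ((n : ℝ) - 1) * D i
        = ((n : ℝ) - 1) * D a + (((n : ℝ) - 1) * D b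
          + ∑ i ∈ (Finset.univ.erase a).erase b, ((n : ℝ) - 1) * D i) := by
      rw [← Finset.add_sum_erase _ _ (Finset.mem_univ a), ← Finset.add_sum_erase _ _ hbmem]
    have hcard : ((Finset.univ.erase a).erase b).card = n - 2 := by
      rw [Finset.card_erase_of_mem hbmem, Finset.card_erase_of_mem (Finset.mem_univ a)]
      simp only [Finset.card_univ, Fintype.card_fin]
      omega
    have hrest : ((n : ℝ) - 2) * dist (x a) (x b)
        ≤ ∑ i ∈ (Finset.univ.erase a).erase b, ((n : ℝ) - 1) * D i := by
      have h1 : ∑ i ∈ (Finset.univ.erase a).erase b, dist (x a) (x b)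
          ≤ ∑ i ∈ (Finset.univ.erase a).erase b, ((n : ℝ) - 1) * D i := by
        apply Finset.sum_le_sum
        intro i hi
        rw [Finset.mem_erase, Finset.mem_erase] at hi
        exact hC i hi.2.1 hi.1
      have h2 : ∑ i ∈ (Finset.univ.erase a).erase b, dist (x a) (x b)
          = ((n : ℝ) - 2) * dist (x a) (x b) := by
        rw [Finset.sum_const, hcard, nsmul_eq_mul]
        congr 1
        have h2n : (2 : ℕ) ≤ n := hn
        push_cast [Nat.cast_sub h2n]
        ring
      rw [← h2]
      exact h1
    have htri : dist (x a) (x b) ≤ dist (x a) z + dist z (x b) := dist_triangle _ _ _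
    have hfinal : ((n : ℝ) - 1) * dist (x a) (x b) ≤ ∑ i : Fin n, ((n : ℝ) - 1) * D i := by
      rw [hsplit]
      have hexp : ((n : ℝ) - 1) * dist (x a) (x b)
          = dist (x a) (x b) + ((n : ℝ) - 2) * dist (x a) (x b) := by ring
      rw [hexp]
      linarith
    rw [← Finset.mul_sum] at hfinal
    have hpos : (0 : ℝ) < (n : ℝ) - 1 := by
      have h2n : (2 : ℝ) ≤ (n : ℝ) := by exact_mod_cast hn
      linarith
    exact le_of_mul_le_mul_left hfinal hpos
end

section
/- For every integer p ≥ 1, the equation T_p(√(1 − x²)) = 2x, where T_p is the p-th Chebyshev polynomial of the first kind, has exactly one solution x in the open interval (0, sin(π/(2p+4))). -/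
open Real Polynomial

/-- For every integer `p ≥ 1`, the equation
`T_p(√(1 − x²)) = 2x`, where `T_p` is the `p`-th Chebyshev polynomial of the
first kind, has exactly one solution in the open interval
`(0, sin(π/(2p+4)))`. -/
theorem chebyshev_equation_unique_root (p : ℕ) (hp : 1 ≤ p) :
    ∃! x : ℝ, x ∈ Set.Ioo 0 (Real.sin (π / (2 * p + 4))) ∧
      (Polynomial.Chebyshev.T ℝ p).eval (Real.sqrt (1 - x ^ 2)) = 2 * x := by
  have pi_pos := Real.pi_pos
  set θ₀ : ℝ := π / (2 * p + 4) with hθ₀def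
  have hden : (0:ℝ) < 2 * p + 4 := by positivity
  have hθ₀pos : 0 < θ₀ := by positivity
  have hp1 : (1:ℝ) ≤ p := by exact_mod_cast hp
  have hθ₀lt : θ₀ < π / 2 := by
    rw [hθ₀def, div_lt_div_iff₀ hden two_pos]
    nlinarith
  have hθ₀le : θ₀ ≤ π / 2 := hθ₀lt.le
  -- the key substitution function
  set g : ℝ → ℝ := fun θ => Real.cos (p * θ) - 2 * Real.sin θ with hgdef
  -- g is strictly antitone on Icc 0 θ₀
  have hpθ₀ : (p:ℝ) * θ₀ = π / 2 - 2 * θ₀ := by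
    rw [hθ₀def]; field_simp; ring
  have hanti : StrictAntiOn g (Set.Icc 0 θ₀) := by
    intro a ha b hb hab
    have hpa : (p:ℝ) * a ∈ Set.Icc (0:ℝ) π := by
      constructor
      · exact mul_nonneg (by positivity) ha.1
      · have : (p:ℝ) * a ≤ (p:ℝ) * θ₀ := by
          apply mul_le_mul_of_nonneg_left ha.2 (by positivity)
        nlinarith [hθ₀pos]
    have hpb : (p:ℝ) * b ∈ Set.Icc (0:ℝ) π := by
      constructor
      · exact mul_nonneg (by positivity) hb.1
      · have : (p:ℝ) * b ≤ (p:ℝ) * θ₀ := by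
          apply mul_le_mul_of_nonneg_left hb.2 (by positivity)
        nlinarith [hθ₀pos]
    have h1 : Real.cos (p * b) < Real.cos (p * a) :=
      Real.strictAntiOn_cos hpa hpb (by nlinarith)
    have h2 : Real.sin a < Real.sin b := by
      apply Real.strictMonoOn_sin _ _ hab
      · exact ⟨by linarith [ha.1], by linarith [ha.2]⟩
      · exact ⟨by linarith [hb.1], by linarith [hb.2]⟩
    simp only [hgdef]
    linarith
  have hg0 : g 0 = 1 := by simp [hgdef]
  have hsθ₀pos : 0 < Real.sin θ₀ := Real.sin_pos_of_pos_of_lt_pi hθ₀pos (by linarith)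
  have hcθ₀lt : Real.cos θ₀ < 1 := by
    have := Real.strictAntiOn_cos (Set.left_mem_Icc.mpr pi_pos.le)
      ⟨hθ₀pos.le, by linarith⟩ hθ₀pos
    simpa using this
  have hgθ₀ : g θ₀ < 0 := by
    have : Real.cos ((p:ℝ) * θ₀) = Real.sin (2 * θ₀) := by
      rw [hpθ₀, Real.cos_pi_div_two_sub]
    simp only [hgdef, this, Real.sin_two_mul]
    nlinarith
  -- continuity
  have hcont : ContinuousOn g (Set.Icc 0 θ₀) := by
    apply Continuous.continuousOn
    fun_prop
  -- existence via IVT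
  have hIVT : (0:ℝ) ∈ g '' Set.Ioo 0 θ₀ := by
    apply intermediate_value_Ioo' hθ₀pos.le hcont
    rw [hg0]
    exact ⟨hgθ₀, one_pos⟩
  obtain ⟨θ, hθmem, hgθ⟩ := hIVT
  -- translate the equation: for x in the interval, the condition is g (arcsin x) = 0
  have key : ∀ x : ℝ, x ∈ Set.Ioo 0 (Real.sin θ₀) →
      ((Polynomial.Chebyshev.T ℝ p).eval (Real.sqrt (1 - x ^ 2)) = 2 * x ↔
        g (Real.arcsin x) = 0) := by
    intro x hx
    have hx1 : x ≤ 1 := le_trans hx.2.le (Real.sin_le_one _)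
    have harc_mem : Real.arcsin x ∈ Set.Ioo 0 θ₀ := by
      constructor
      · exact Real.arcsin_pos.mpr hx.1
      · rw [Real.arcsin_lt_iff_lt_sin ⟨by linarith [hx.1], hx1⟩ ⟨by linarith, hθ₀le⟩]
        exact hx.2
    have hsin : Real.sin (Real.arcsin x) = x :=
      Real.sin_arcsin (by linarith [hx.1]) hx1
    have hsqrt : Real.sqrt (1 - x ^ 2) = Real.cos (Real.arcsin x) := by
      rw [Real.cos_arcsin]
    rw [hsqrt]
    have hT : (Polynomial.Chebyshev.T ℝ p).eval (Real.cos (Real.arcsin x)) =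
        Real.cos (p * Real.arcsin x) := by
      have := Polynomial.Chebyshev.T_real_cos (Real.arcsin x) (p : ℤ)
      push_cast at this; exact this
    rw [hT]
    constructor
    · intro h
      simp only [hgdef]
      rw [hsin]
      linarith
    · intro h
      simp only [hgdef] at h
      rw [hsin] at h
      linarith
  refine ⟨Real.sin θ, ⟨?_, ?_⟩, ?_⟩
  · -- sin θ ∈ Ioo 0 (sin θ₀)
    constructor
    · exact Real.sin_pos_of_pos_of_lt_pi hθmem.1 (by linarith [hθmem.2])
    · apply Real.strictMonoOn_sin ⟨by linarith [hθmem.1], by linarith [hθmem.2]⟩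
        ⟨by linarith, hθ₀le⟩ hθmem.2
  · -- the equation holds
    have hsθ : Real.sin θ ∈ Set.Ioo 0 (Real.sin θ₀) := by
      constructor
      · exact Real.sin_pos_of_pos_of_lt_pi hθmem.1 (by linarith [hθmem.2])
      · apply Real.strictMonoOn_sin ⟨by linarith [hθmem.1], by linarith [hθmem.2]⟩
          ⟨by linarith, hθ₀le⟩ hθmem.2
    rw [key _ hsθ]
    have : Real.arcsin (Real.sin θ) = θ :=
      Real.arcsin_sin (by linarith [hθmem.1]) (by linarith [hθmem.2])
    rw [this]; exact hgθ
  · -- uniqueness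
    rintro y ⟨hy, hyeq⟩
    rw [key _ hy] at hyeq
    have hy1 : y ≤ 1 := le_trans hy.2.le (Real.sin_le_one _)
    have harc_mem : Real.arcsin y ∈ Set.Ioo 0 θ₀ := by
      constructor
      · exact Real.arcsin_pos.mpr hy.1
      · rw [Real.arcsin_lt_iff_lt_sin ⟨by linarith [hy.1], hy1⟩ ⟨by linarith, hθ₀le⟩]
        exact hy.2
    have : Real.arcsin y = θ := by
      apply hanti.injOn (Set.mem_Icc_of_Ioo harc_mem) (Set.mem_Icc_of_Ioo hθmem)
      rw [hyeq, hgθ]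
    calc y = Real.sin (Real.arcsin y) := (Real.sin_arcsin (by linarith [hy.1]) hy1).symm
    _ = Real.sin θ := by rw [this]
end

section
/- For each integer n ≥ 4 set p_n = ⌊n/2⌋ − 1 and let λ_n be the unique solution in the open interval (0, sin(π/(2p_n+4))) of the equation T_{p_n}(√(1 − x²)) = 2x, where T_p is the p-th Chebyshev polynomial of the first kind. Then lim_{n→∞} n·λ_n = π (equivalently, 1/(n·λ_n) → 1/π as n → ∞). -/
open Real Filter

private lemma cheb_aux2 (P th lamv : ℝ) (hP : 1 ≤ P) (h1 : 0 < lamv)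
    (hthpos : 0 < th) (hthlt : th < π / (2 * P + 4))
    (hsin : Real.sin th = lamv) (heqc : Real.cos (P * th) = 2 * lamv) :
    π / (2 * (P + π)) * (1 - (π / (2 * P + 4)) ^ 2 / 4) ≤ lamv ∧
      lamv ≤ π / (2 * P) := by
  have pi_pos := Real.pi_pos
  have pi_le4 := Real.pi_le_four
  have hden : (0 : ℝ) < 2 * P + 4 := by linarith
  obtain ⟨c, hcdef⟩ : ∃ c : ℝ, c = π / (2 * P + 4) := ⟨_, rfl⟩
  rw [← hcdef] at hthlt ⊢
  have hc0 : 0 < c := hcdef ▸ div_pos pi_pos hden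
  have hc6 : c ≤ π / 6 := by
    rw [hcdef, div_le_div_iff₀ hden (by norm_num)]
    nlinarith
  have hc2 : c ≤ π / 2 := by linarith
  have hc1 : c ≤ 1 := by linarith
  have hPθlt : P * th < π / 2 := by
    have h' : P * th < P * c := mul_lt_mul_of_pos_left hthlt (by linarith)
    have h'' : P * c < π / 2 := by
      rw [hcdef, ← mul_div_assoc, div_lt_div_iff₀ hden (by norm_num)]
      nlinarith
    linarith
  have hPθpos : 0 < P * th := mul_pos (by linarith) hthpos
  obtain ⟨s, hsdef⟩ : ∃ s : ℝ, s = π / 2 - P * th := ⟨_, rfl⟩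
  have hs0 : 0 < s := by rw [hsdef]; linarith
  have hs2 : s ≤ π / 2 := by rw [hsdef]; linarith
  have hsins : Real.sin s = 2 * lamv := by
    rw [hsdef, Real.sin_pi_div_two_sub, heqc]
  have hup : 2 * lamv ≤ s := by rw [← hsins]; exact Real.sin_le hs0.le
  have hlow : 2 / π * s ≤ 2 * lamv := by rw [← hsins]; exact Real.mul_le_sin hs0.le hs2
  have hlamθ : lamv ≤ th := by rw [← hsin]; exact Real.sin_le hthpos.le
  have hθ2 : 2 / π * th ≤ lamv := by
    rw [← hsin]; exact Real.mul_le_sin hthpos.le (by linarith)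
  have hcube : th - th ^ 3 / 4 < lamv := by
    rw [← hsin]; linarith [Real.sin_gt_sub_cube hthpos, pow_pos hthpos 3]
  -- th ≤ π / (2P)
  have hθupper : th ≤ π / (2 * P) := by
    rw [le_div_iff₀ (by linarith)]
    have he : 4 / π * th = 2 * (2 / π * th) := by ring
    have hpos : 0 ≤ 4 / π * th := by positivity
    have h4 : 4 / π * th ≤ π / 2 - P * th := by rw [← hsdef]; linarith
    nlinarith
  -- th ≥ π / (2(P+π))
  have hθlower : π / (2 * (P + π)) ≤ th := by
    rw [div_le_iff₀ (by positivity)]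
    have h6 : 2 / π * s ≤ 2 * th := by linarith
    rw [div_mul_eq_mul_div, div_le_iff₀ pi_pos] at h6
    have h5 : π / 2 - P * th ≤ π * th := by rw [hsdef] at h6; linarith
    linarith
  constructor
  · have hlb0 : 0 < π / (2 * (P + π)) := by positivity
    have hc34 : (0 : ℝ) < 1 - c ^ 2 / 4 := by nlinarith
    have hθsq : th ^ 2 ≤ c ^ 2 := by nlinarith
    have step1 : th * (1 - c ^ 2 / 4) ≤ th - th ^ 3 / 4 := by nlinarith
    have step2 : π / (2 * (P + π)) * (1 - c ^ 2 / 4) ≤ th * (1 - c ^ 2 / 4) :=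
      mul_le_mul_of_nonneg_right hθlower hc34.le
    calc π / (2 * (P + π)) * (1 - c ^ 2 / 4) ≤ th * (1 - c ^ 2 / 4) := step2
      _ ≤ th - th ^ 3 / 4 := step1
      _ ≤ lamv := hcube.le
  · exact le_trans hlamθ hθupper

private lemma cheb_aux (p : ℕ) (hp : 1 ≤ p) (lam : ℝ) (h1 : 0 < lam)
    (h2 : lam < Real.sin (π / (2 * p + 4)))
    (heq : (Polynomial.Chebyshev.T ℝ p).eval (Real.sqrt (1 - lam ^ 2)) = 2 * lam) :
    π / (2 * ((p : ℝ) + π)) * (1 - (π / (2 * p + 4)) ^ 2 / 4) ≤ lam ∧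
      lam ≤ π / (2 * p) := by
  have pi_pos := Real.pi_pos
  have pi_le4 := Real.pi_le_four
  have hP : (1 : ℝ) ≤ (p : ℝ) := by exact_mod_cast hp
  have hden : (0 : ℝ) < 2 * (p : ℝ) + 4 := by linarith
  have hc2 : π / (2 * (p : ℝ) + 4) ≤ π / 2 := by
    rw [div_le_div_iff₀ hden (by norm_num)]
    nlinarith
  have hθpos : 0 < Real.arcsin lam := Real.arcsin_pos.2 h1
  have hθlt : Real.arcsin lam < π / (2 * (p : ℝ) + 4) := by
    have hc0 : 0 < π / (2 * (p : ℝ) + 4) := div_pos pi_pos hden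
    exact (Real.arcsin_lt_iff_lt_sin' ⟨by linarith, hc2⟩).2 h2
  have hlam1 : lam ≤ 1 := le_of_lt (lt_of_lt_of_le h2 (Real.sin_le_one _))
  have hsin : Real.sin (Real.arcsin lam) = lam := Real.sin_arcsin (by linarith) hlam1
  have heqc : Real.cos ((p : ℝ) * Real.arcsin lam) = 2 * lam := by
    rw [← Real.cos_arcsin] at heq
    rw [Polynomial.Chebyshev.T_real_cos] at heq
    rw [← heq]
    push_cast
    ring_nf
  exact cheb_aux2 (p : ℝ) (Real.arcsin lam) lam hP h1 hθpos hθlt hsin heqc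

/-- For `n ≥ 4` set `pₙ = ⌊n/2⌋ − 1` and let `λₙ` be the
(unique) solution of `T_{pₙ}(√(1 − x²)) = 2x` in `(0, sin(π/(2pₙ+4)))`,
where `T_p` is the `p`-th Chebyshev polynomial of the first kind.  Then
`n·λₙ → π` as `n → ∞`. -/
theorem chebyshev_root_asymptotics (lam : ℕ → ℝ)
    (h : ∀ n : ℕ, 4 ≤ n →
      lam n ∈ Set.Ioo 0 (Real.sin (π / (2 * (n / 2 - 1 : ℕ) + 4))) ∧
      (Polynomial.Chebyshev.T ℝ (n / 2 - 1 : ℕ)).eval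
        (Real.sqrt (1 - lam n ^ 2)) = 2 * lam n) :
    Tendsto (fun n : ℕ => (n : ℝ) * lam n) atTop (nhds π) := by
  have pi_pos := Real.pi_pos
  set P : ℕ → ℝ := fun n => ((n / 2 - 1 : ℕ) : ℝ) with hPdef
  set L : ℕ → ℝ := fun n =>
    (2 * P n + 2) * (π / (2 * (P n + π))) * (1 - (π / (2 * P n + 4)) ^ 2 / 4) with hLdef
  set U : ℕ → ℝ := fun n => (2 * P n + 3) * (π / (2 * P n)) with hUdef
  have hPtop : Tendsto P atTop atTop := by
    apply tendsto_natCast_atTop_atTop.comp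
    apply tendsto_atTop_atTop.2
    intro b
    exact ⟨2 * b + 2, fun n hn => by omega⟩
  -- limit of U
  have hUlim : Tendsto U atTop (nhds π) := by
    have key : Tendsto (fun x : ℝ => (2 * x + 3) * (π / (2 * x))) atTop (nhds π) := by
      have h1 : Tendsto (fun x : ℝ => π + 3 * π / (2 * x)) atTop (nhds (π + 0)) := by
        exact tendsto_const_nhds.add
          (Filter.Tendsto.div_atTop tendsto_const_nhds
            (tendsto_atTop_atTop.2 fun b => ⟨max b 0, fun x hx => by
              obtain ⟨hb, h0⟩ := max_le_iff.mp hx; linarith⟩))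
      rw [add_zero] at h1
      apply h1.congr'
      filter_upwards [eventually_gt_atTop (0:ℝ)] with x hx
      field_simp
    exact key.comp hPtop
  -- limit of L
  have hLlim : Tendsto L atTop (nhds π) := by
    have key : Tendsto (fun x : ℝ =>
        (2 * x + 2) * (π / (2 * (x + π))) * (1 - (π / (2 * x + 4)) ^ 2 / 4))
        atTop (nhds π) := by
      have h1 : Tendsto (fun x : ℝ => π - π * (π - 1) / (x + π)) atTop (nhds (π - 0)) := by
        exact tendsto_const_nhds.sub
          (Filter.Tendsto.div_atTop tendsto_const_nhds
            (tendsto_atTop_atTop.2 fun b => ⟨max b 0, fun x hx => by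
              obtain ⟨hb, h0⟩ := max_le_iff.mp hx
              have := pi_pos; linarith⟩))
      rw [sub_zero] at h1
      have h2 : Tendsto (fun x : ℝ => (2 * x + 2) * (π / (2 * (x + π)))) atTop (nhds π) := by
        apply h1.congr'
        filter_upwards [eventually_gt_atTop (0:ℝ)] with x hx
        have : x + π ≠ 0 := by positivity
        field_simp
        ring
      have h3 : Tendsto (fun x : ℝ => π / (2 * x + 4)) atTop (nhds 0) :=
        Filter.Tendsto.div_atTop tendsto_const_nhds
          (tendsto_atTop_atTop.2 fun b => ⟨max b 0, fun x hx => by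
            obtain ⟨hb, h0⟩ := max_le_iff.mp hx; linarith⟩)
      have h4 : Tendsto (fun x : ℝ => 1 - (π / (2 * x + 4)) ^ 2 / 4) atTop (nhds (1 - 0 ^ 2 / 4)) :=
        tendsto_const_nhds.sub (((h3.pow 2)).div_const 4)
      have h5 := h2.mul h4
      norm_num at h5
      exact h5
    exact key.comp hPtop
  -- squeeze
  apply tendsto_of_tendsto_of_tendsto_of_le_of_le' hLlim hUlim
  · -- L n ≤ n * lam n eventually
    filter_upwards [eventually_ge_atTop 4] with n hn
    obtain ⟨⟨h1, h2⟩, heq⟩ := h n hn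
    have hp : 1 ≤ n / 2 - 1 := by omega
    obtain ⟨hlb, hub⟩ := cheb_aux (n / 2 - 1) hp (lam n) h1 h2 heq
    have hn2 : (2 * (n / 2 - 1) + 2 : ℕ) ≤ n := by omega
    have hn2' : 2 * P n + 2 ≤ (n : ℝ) := by simp only [hPdef]; exact_mod_cast hn2
    have hlb0 : 0 ≤ π / (2 * (P n + π)) * (1 - (π / (2 * P n + 4)) ^ 2 / 4) := by
      have hP1 : (1 : ℝ) ≤ P n := by simp only [hPdef]; exact_mod_cast hp
      have hden : (0:ℝ) < 2 * P n + 4 := by linarith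
      have hc6 : π / (2 * P n + 4) ≤ π / 6 := by
        rw [div_le_div_iff₀ hden (by norm_num)]
        nlinarith
      have hc0 : 0 < π / (2 * P n + 4) := by positivity
      have : (0:ℝ) < 1 - (π / (2 * P n + 4)) ^ 2 / 4 := by nlinarith [Real.pi_le_four]
      positivity
    calc L n = (2 * P n + 2) * (π / (2 * (P n + π)) * (1 - (π / (2 * P n + 4)) ^ 2 / 4)) := by
          rw [hLdef]; ring
      _ ≤ (2 * P n + 2) * lam n := by
          apply mul_le_mul_of_nonneg_left hlb
          have hP1 : (1 : ℝ) ≤ P n := by simp only [hPdef]; exact_mod_cast hp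
          linarith
      _ ≤ (n : ℝ) * lam n := mul_le_mul_of_nonneg_right hn2' h1.le
  · -- n * lam n ≤ U n eventually
    filter_upwards [eventually_ge_atTop 4] with n hn
    obtain ⟨⟨h1, h2⟩, heq⟩ := h n hn
    have hp : 1 ≤ n / 2 - 1 := by omega
    obtain ⟨hlb, hub⟩ := cheb_aux (n / 2 - 1) hp (lam n) h1 h2 heq
    have hn3 : (n : ℕ) ≤ 2 * (n / 2 - 1) + 3 := by omega
    have hn3' : (n : ℝ) ≤ 2 * P n + 3 := by simp only [hPdef]; exact_mod_cast hn3
    have hP1 : (1 : ℝ) ≤ P n := by simp only [hPdef]; exact_mod_cast hp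
    calc (n : ℝ) * lam n ≤ (2 * P n + 3) * lam n :=
          mul_le_mul_of_nonneg_right hn3' h1.le
      _ ≤ (2 * P n + 3) * (π / (2 * P n)) := by
          apply mul_le_mul_of_nonneg_left hub (by linarith)
      _ = U n := rfl
end

section
/- Let q ≥ 2 and n ≥ 2 be integers. The map d : (ℝ^q)^n → ℝ carrying (x1,...,xn) to the total length of a minimum spanning tree of the complete Euclidean graph on x1,...,xn is an n-distance on ℝ^q: d(x1,...,xn) = 0 if and only if x1 = ⋯ = xn, d is symmetric in its arguments, and d(x1,...,xn) ≤ Σ_{i=1}^n d(x1,...,xn)_i^z for all x1,...,xn,z ∈ ℝ^q. -/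
open scoped Classical

/-- The total edge length of a simple graph `G` on the index set `Fin m`,
with vertices placed at the points `p 0, …, p (m-1)` of a metric space. -/
noncomputable def egLength {E : Type*} [PseudoMetricSpace E] {m : ℕ}
    (p : Fin m → E) (G : SimpleGraph (Fin m)) : ℝ :=
  ∑ e : Sym2 (Fin m),
    if e ∈ G.edgeSet then
      Sym2.lift ⟨fun i j => dist (p i) (p j), fun i j => dist_comm _ _⟩ e
    else 0

/-- The total length of a minimum spanning tree of the complete Euclidean
graph on the points `p 0, …, p (m-1)`: the minimum of the total edge length
over all connected simple graphs on the index set. -/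
noncomputable def mstLength {E : Type*} [PseudoMetricSpace E] {m : ℕ}
    (p : Fin m → E) : ℝ :=
  sInf {t : ℝ | ∃ G : SimpleGraph (Fin m), G.Connected ∧ t = egLength p G}

namespace MSTAux

variable {E : Type*} [PseudoMetricSpace E] {m : ℕ}

/-- The length of one edge. -/
noncomputable def elen (p : Fin m → E) : Sym2 (Fin m) → ℝ :=
  Sym2.lift ⟨fun i j => dist (p i) (p j), fun i j => dist_comm _ _⟩

@[simp] lemma elen_mk (p : Fin m → E) (a b : Fin m) : elen p s(a, b) = dist (p a) (p b) := rfl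

lemma elen_nonneg (p : Fin m → E) (e : Sym2 (Fin m)) : 0 ≤ elen p e := by
  induction e using Sym2.ind with
  | _ a b => exact dist_nonneg

lemma egLength_eq (p : Fin m → E) (G : SimpleGraph (Fin m)) :
    egLength p G = ∑ e : Sym2 (Fin m), if e ∈ G.edgeSet then elen p e else 0 := rfl

lemma egLength_nonneg (p : Fin m → E) (G : SimpleGraph (Fin m)) : 0 ≤ egLength p G := by
  rw [egLength_eq]
  refine Finset.sum_nonneg fun e _ => ?_
  split
  · exact elen_nonneg p e
  · exact le_rfl

lemma dist_le_walk_sum (p : Fin m → E) {G : SimpleGraph (Fin m)} {a b : Fin m}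
    (w : G.Walk a b) : dist (p a) (p b) ≤ (w.edges.map (elen p)).sum := by
  induction w with
  | nil => simp
  | @cons u v c h w ih =>
    rw [SimpleGraph.Walk.edges_cons, List.map_cons, List.sum_cons, elen_mk]
    calc dist (p u) (p c) ≤ dist (p u) (p v) + dist (p v) (p c) := dist_triangle _ _ _
      _ ≤ dist (p u) (p v) + (w.edges.map (elen p)).sum := by linarith

lemma dist_le_egLength (p : Fin m → E) {G : SimpleGraph (Fin m)} (hG : G.Connected)
    (a b : Fin m) : dist (p a) (p b) ≤ egLength p G := by
  obtain ⟨w⟩ := hG a b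
  have h1 := dist_le_walk_sum p w.toPath.1
  have hnd : w.toPath.1.edges.Nodup := w.toPath.2.isTrail.edges_nodup
  have h2 : (w.toPath.1.edges.map (elen p)).sum
      = ∑ e ∈ w.toPath.1.edges.toFinset, elen p e := (List.sum_toFinset _ hnd).symm
  have h3 : ∑ e ∈ w.toPath.1.edges.toFinset, elen p e
      = ∑ e ∈ w.toPath.1.edges.toFinset, (if e ∈ G.edgeSet then elen p e else 0) := by
    refine Finset.sum_congr rfl fun e he => ?_
    rw [if_pos (w.toPath.1.edges_subset_edgeSet (List.mem_toFinset.mp he))]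
  have h4 : ∑ e ∈ w.toPath.1.edges.toFinset, (if e ∈ G.edgeSet then elen p e else 0)
      ≤ ∑ e : Sym2 (Fin m), (if e ∈ G.edgeSet then elen p e else 0) := by
    refine Finset.sum_le_sum_of_subset_of_nonneg (Finset.subset_univ _) fun e _ _ => ?_
    split
    · exact elen_nonneg p e
    · exact le_rfl
  rw [egLength_eq]
  linarith

/-- The set of which `mstLength` is the infimum. -/
def mstSet (p : Fin m → E) : Set ℝ :=
  {t : ℝ | ∃ G : SimpleGraph (Fin m), G.Connected ∧ t = egLength p G}

lemma mstLength_def (p : Fin m → E) : mstLength p = sInf (mstSet p) := rfl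

lemma mstSet_finite (p : Fin m → E) : (mstSet p).Finite := by
  have hsub : mstSet p ⊆ (fun G : SimpleGraph (Fin m) => egLength p G) '' Set.univ := by
    rintro t ⟨G, _, rfl⟩
    exact ⟨G, trivial, rfl⟩
  exact (Set.finite_univ.image _).subset hsub

lemma mstSet_nonempty (p : Fin m → E) (h : Nonempty (Fin m)) : (mstSet p).Nonempty :=
  ⟨egLength p ⊤, ⊤, SimpleGraph.connected_top, rfl⟩

lemma mstLength_mem (p : Fin m → E) (h : Nonempty (Fin m)) : mstLength p ∈ mstSet p :=
  (mstSet_nonempty p h).csInf_mem (mstSet_finite p)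

lemma mstLength_le (p : Fin m → E) {G : SimpleGraph (Fin m)} (hG : G.Connected) :
    mstLength p ≤ egLength p G :=
  csInf_le (mstSet_finite p).bddBelow ⟨G, hG, rfl⟩

lemma dist_le_mstLength (p : Fin m → E) (h : Nonempty (Fin m)) (a b : Fin m) :
    dist (p a) (p b) ≤ mstLength p := by
  obtain ⟨G, hG, he⟩ := mstLength_mem p h
  rw [he]
  exact dist_le_egLength p hG a b

/-- `Sym2.map` of a permutation as an equivalence. -/
def sym2Congr (σ : Equiv.Perm (Fin m)) : Sym2 (Fin m) ≃ Sym2 (Fin m) where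
  toFun := Sym2.map σ
  invFun := Sym2.map σ.symm
  left_inv e := by induction e using Sym2.ind with | _ a b => simp
  right_inv e := by induction e using Sym2.ind with | _ a b => simp

lemma egLength_comp (p : Fin m → E) (σ : Equiv.Perm (Fin m)) (G : SimpleGraph (Fin m)) :
    egLength (p ∘ σ) (G.comap σ) = egLength p G := by
  rw [egLength_eq, egLength_eq]
  refine Fintype.sum_equiv (sym2Congr σ) _ _ fun e => ?_
  induction e using Sym2.ind with
  | _ a b =>
    have hre : (sym2Congr σ) s(a, b) = s(σ a, σ b) := rfl
    rw [hre]
    have hmem : s(a, b) ∈ (G.comap ⇑σ).edgeSet ↔ s(σ a, σ b) ∈ G.edgeSet := by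
      simp [SimpleGraph.mem_edgeSet]
    by_cases h : s(σ a, σ b) ∈ G.edgeSet
    · rw [if_pos (hmem.mpr h), if_pos h]
      rfl
    · rw [if_neg (fun hc => h (hmem.mp hc)), if_neg h]

lemma comap_connected_iff (σ : Equiv.Perm (Fin m)) (G : SimpleGraph (Fin m)) :
    (G.comap ⇑σ).Connected ↔ G.Connected :=
  SimpleGraph.Iso.connected_iff ⟨σ, Iff.rfl⟩

lemma mstSet_comp (p : Fin m → E) (σ : Equiv.Perm (Fin m)) : mstSet (p ∘ σ) = mstSet p := by
  ext t
  constructor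
  · rintro ⟨G, hG, rfl⟩
    refine ⟨G.comap ⇑σ.symm, (comap_connected_iff σ.symm G).mpr hG, ?_⟩
    have := egLength_comp (p ∘ σ) σ.symm G
    have hps : (p ∘ ⇑σ) ∘ ⇑σ.symm = p := by
      funext i; simp
    rw [hps] at this
    exact this.symm
  · rintro ⟨G, hG, rfl⟩
    exact ⟨G.comap ⇑σ, (comap_connected_iff σ G).mpr hG, (egLength_comp p σ G).symm⟩

lemma elen_update_le (x : Fin m → E) (i : Fin m) (z : E) (e : Sym2 (Fin m)) :
    elen x e ≤ elen (Function.update x i z) e + (if i ∈ e then dist (x i) z else 0) := by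
  induction e using Sym2.ind with
  | _ a b =>
    by_cases ha : a = i
    · subst ha
      rw [if_pos (by simp [Sym2.mem_iff])]
      by_cases hb : b = a
      · subst hb
        simp [dist_nonneg]
      · rw [elen_mk, elen_mk, Function.update_self, Function.update_of_ne hb]
        calc dist (x a) (x b) ≤ dist (x a) z + dist z (x b) := dist_triangle _ _ _
          _ = dist z (x b) + dist (x a) z := by ring
    · by_cases hb : b = i
      · subst hb
        rw [if_pos (by simp [Sym2.mem_iff])]
        rw [elen_mk, elen_mk, Function.update_self, Function.update_of_ne ha]
        calc dist (x a) (x b) ≤ dist (x a) z + dist z (x b) := dist_triangle _ _ _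
          _ = dist (x a) z + dist (x b) z := by rw [dist_comm z (x b)]
      · rw [if_neg (by simp [Sym2.mem_iff, Ne.symm, ha, hb])]
        rw [elen_mk, elen_mk, Function.update_of_ne ha, Function.update_of_ne hb, add_zero]

lemma egLength_update_le (x : Fin m → E) (i : Fin m) (z : E) (G : SimpleGraph (Fin m)) :
    egLength x G ≤ egLength (Function.update x i z) G + ((m - 1 : ℕ) : ℝ) * dist (x i) z := by
  set y := Function.update x i z with hy
  set D := dist (x i) z with hD
  have hterm : ∀ e : Sym2 (Fin m),
      (if e ∈ G.edgeSet then elen x e else 0)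
        ≤ (if e ∈ G.edgeSet then elen y e else 0)
          + (if e ∈ G.edgeSet ∧ i ∈ e then D else 0) := by
    intro e
    by_cases he : e ∈ G.edgeSet
    · rw [if_pos he, if_pos he]
      by_cases hi : i ∈ e
      · rw [if_pos ⟨he, hi⟩]
        have := elen_update_le x i z e
        rwa [if_pos hi] at this
      · rw [if_neg (fun h => hi h.2)]
        have := elen_update_le x i z e
        rwa [if_neg hi, add_zero, ← add_zero (elen y e)] at this
    · rw [if_neg he, if_neg he, if_neg (fun h => he h.1), add_zero]
  have h1 : egLength x G ≤ egLength y G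
      + ∑ e : Sym2 (Fin m), (if e ∈ G.edgeSet ∧ i ∈ e then D else 0) := by
    rw [egLength_eq, egLength_eq, ← Finset.sum_add_distrib]
    exact Finset.sum_le_sum fun e _ => hterm e
  have h2 : ∑ e : Sym2 (Fin m), (if e ∈ G.edgeSet ∧ i ∈ e then D else 0)
      ≤ ((m - 1 : ℕ) : ℝ) * D := by
    have hD0 : 0 ≤ D := dist_nonneg
    rw [← Finset.sum_filter, Finset.sum_const, nsmul_eq_mul]
    have hcard : (Finset.univ.filter
        (fun e : Sym2 (Fin m) => e ∈ G.edgeSet ∧ i ∈ e)).card ≤ m - 1 := by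
      have heq : Finset.univ.filter (fun e : Sym2 (Fin m) => e ∈ G.edgeSet ∧ i ∈ e)
          = G.incidenceFinset i := by
        ext e
        simp [SimpleGraph.mem_incidenceFinset, SimpleGraph.incidenceSet]
      rw [heq, SimpleGraph.card_incidenceFinset_eq_degree G i]
      have hlt := SimpleGraph.degree_lt_card_verts (G := G) i
      rw [Fintype.card_fin] at hlt
      omega
    exact mul_le_mul_of_nonneg_right (Nat.cast_le.mpr hcard) hD0
  linarith

end MSTAux

/-- The map `(x₁,…,xₙ) ↦` total length of a minimum spanning
tree of the complete Euclidean graph on `x₁,…,xₙ` is an `n`-distance on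
`ℝ^q`: it vanishes exactly on constant tuples, it is symmetric, and it
satisfies the simplex inequality. -/
theorem mstLength_is_n_distance (q n : ℕ) (hq : 2 ≤ q) (hn : 2 ≤ n) :
    (∀ x : Fin n → EuclideanSpace ℝ (Fin q),
      mstLength x = 0 ↔ ∀ i j : Fin n, x i = x j) ∧
    (∀ (x : Fin n → EuclideanSpace ℝ (Fin q)) (σ : Equiv.Perm (Fin n)),
      mstLength (x ∘ σ) = mstLength x) ∧
    (∀ (x : Fin n → EuclideanSpace ℝ (Fin q)) (z : EuclideanSpace ℝ (Fin q)),
      mstLength x ≤ ∑ i : Fin n, mstLength (Function.update x i z)) := by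
  have hne : Nonempty (Fin n) := ⟨⟨0, by omega⟩⟩
  refine ⟨?_, ?_, ?_⟩
  · intro x
    constructor
    · intro h0 i j
      have h1 := MSTAux.dist_le_mstLength x hne i j
      rw [h0] at h1
      exact dist_le_zero.mp h1
    · intro h
      have hall : egLength x (⊤ : SimpleGraph (Fin n)) = 0 := by
        rw [MSTAux.egLength_eq]
        refine Finset.sum_eq_zero fun e _ => ?_
        have hz : MSTAux.elen x e = 0 := by
          induction e using Sym2.ind with
          | _ a b => rw [MSTAux.elen_mk, h a b, dist_self]
        split
        · exact hz
        · rfl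
      have hle : mstLength x ≤ 0 := by
        rw [← hall]
        exact MSTAux.mstLength_le x SimpleGraph.connected_top
      have hge : 0 ≤ mstLength x := by
        refine le_csInf (MSTAux.mstSet_nonempty x hne) ?_
        rintro t ⟨G, _, rfl⟩
        exact MSTAux.egLength_nonneg x G
      linarith
  · intro x σ
    show sInf (MSTAux.mstSet (x ∘ σ)) = sInf (MSTAux.mstSet x)
    rw [MSTAux.mstSet_comp]
  · intro x z
    set i0 : Fin n := ⟨0, by omega⟩ with hi0
    set D := dist (x i0) z with hD
    obtain ⟨G, hG, hGe⟩ := MSTAux.mstLength_mem (Function.update x i0 z) hne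
    have h1 : mstLength x ≤ mstLength (Function.update x i0 z) + ((n - 1 : ℕ) : ℝ) * D := by
      calc mstLength x ≤ egLength x G := MSTAux.mstLength_le x hG
        _ ≤ egLength (Function.update x i0 z) G + ((n - 1 : ℕ) : ℝ) * D :=
            MSTAux.egLength_update_le x i0 z G
        _ = mstLength (Function.update x i0 z) + ((n - 1 : ℕ) : ℝ) * D := by rw [hGe]
    have h2 : ∀ j ∈ Finset.univ.erase i0, D ≤ mstLength (Function.update x j z) := by
      intro j hj
      have hji : j ≠ i0 := (Finset.mem_erase.mp hj).1
      have hd := MSTAux.dist_le_mstLength (Function.update x j z) hne i0 j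
      rwa [Function.update_of_ne (Ne.symm hji), Function.update_self] at hd
    have h3 : ((n - 1 : ℕ) : ℝ) * D
        ≤ ∑ j ∈ Finset.univ.erase i0, mstLength (Function.update x j z) := by
      have hcard : (Finset.univ.erase i0).card = n - 1 := by
        rw [Finset.card_erase_of_mem (Finset.mem_univ i0), Finset.card_univ, Fintype.card_fin]
      calc ((n - 1 : ℕ) : ℝ) * D = ∑ _j ∈ Finset.univ.erase i0, D := by
            rw [Finset.sum_const, nsmul_eq_mul, hcard]
        _ ≤ _ := Finset.sum_le_sum h2
    have h4 : ∑ j ∈ Finset.univ.erase i0, mstLength (Function.update x j z)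
        + mstLength (Function.update x i0 z)
        = ∑ i : Fin n, mstLength (Function.update x i z) :=
      Finset.sum_erase_add _ _ (Finset.mem_univ i0)
    linarith
end

section
/- Let q ≥ 2 and n ≥ 2 be integers and let d be the map carrying (x1,...,xn) ∈ (ℝ^q)^n to the total length of a minimum spanning tree of the complete Euclidean graph on x1,...,xn. Then for all x1,...,xn,z ∈ ℝ^q one has n · d(x1,...,xn) ≤ 2 · Σ_{i=1}^n d(x1,...,xn)_i^z; consequently the best constant of this n-distance satisfies K*_n ≤ 2/n. -/
open scoped Classical

noncomputable def elen {E : Type*} [PseudoMetricSpace E] {α : Type*} (p : α → E) : Sym2 α → ℝ :=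
  Sym2.lift ⟨fun i j => dist (p i) (p j), fun _ _ => dist_comm _ _⟩

lemma elen_mk {E : Type*} [PseudoMetricSpace E] {α : Type*} (p : α → E) (u v : α) :
    elen p s(u, v) = dist (p u) (p v) := rfl

lemma elen_nonneg {E : Type*} [PseudoMetricSpace E] {α : Type*} (p : α → E) (e : Sym2 α) :
    0 ≤ elen p e := by
  induction e using Sym2.ind with
  | _ u v => rw [elen_mk]; exact dist_nonneg

lemma egLength_eq {E : Type*} [PseudoMetricSpace E] {m : ℕ} (p : Fin m → E)
    (G : SimpleGraph (Fin m)) :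
    egLength p G = ∑ e : Sym2 (Fin m), (G.edgeSet).indicator (elen p) e := by
  refine Finset.sum_congr rfl fun e _ => ?_
  by_cases h : e ∈ G.edgeSet
  · rw [if_pos h, Set.indicator_of_mem h]; rfl
  · rw [if_neg h, Set.indicator_of_notMem h]

lemma ind_nonneg {E : Type*} [PseudoMetricSpace E] {α : Type*} (p : α → E)
    (S : Set (Sym2 α)) (e : Sym2 α) : 0 ≤ S.indicator (elen p) e :=
  Set.indicator_nonneg (fun e _ => elen_nonneg p e) e

lemma egLength_nonneg {E : Type*} [PseudoMetricSpace E] {m : ℕ} (p : Fin m → E)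
    (G : SimpleGraph (Fin m)) : 0 ≤ egLength p G := by
  rw [egLength_eq]
  exact Finset.sum_nonneg fun e _ => ind_nonneg p _ e

lemma egLength_sup_le {E : Type*} [PseudoMetricSpace E] {m : ℕ} (p : Fin m → E)
    (A B : SimpleGraph (Fin m)) : egLength p (A ⊔ B) ≤ egLength p A + egLength p B := by
  rw [egLength_eq, egLength_eq, egLength_eq, ← Finset.sum_add_distrib]
  refine Finset.sum_le_sum fun e _ => ?_
  have hA := ind_nonneg p A.edgeSet e
  have hB := ind_nonneg p B.edgeSet e
  by_cases h : e ∈ (A ⊔ B).edgeSet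
  · rw [Set.indicator_of_mem h]
    rw [SimpleGraph.edgeSet_sup] at h
    rcases h with h | h
    · rw [Set.indicator_of_mem h]; linarith
    · rw [Set.indicator_of_mem h]; linarith
  · rw [Set.indicator_of_notMem h]; linarith

lemma egLength_single_le {E : Type*} [PseudoMetricSpace E] {m : ℕ} (p : Fin m → E)
    (a b : Fin m) :
    egLength p (SimpleGraph.fromEdgeSet {s(a, b)}) ≤ dist (p a) (p b) := by
  rw [egLength_eq]
  have key : ∀ e : Sym2 (Fin m),
      ((SimpleGraph.fromEdgeSet {s(a, b)}).edgeSet).indicator (elen p) e =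
        if e = s(a, b) then ((SimpleGraph.fromEdgeSet {s(a, b)}).edgeSet).indicator (elen p) e
        else 0 := by
    intro e
    by_cases h : e = s(a, b)
    · rw [if_pos h]
    · rw [if_neg h]
      refine Set.indicator_of_notMem ?_ _
      rw [SimpleGraph.edgeSet_fromEdgeSet]
      intro hc
      exact h hc.1
  calc (∑ e : Sym2 (Fin m), ((SimpleGraph.fromEdgeSet {s(a, b)}).edgeSet).indicator (elen p) e)
      = ∑ e : Sym2 (Fin m), if e = s(a, b) then
          ((SimpleGraph.fromEdgeSet {s(a, b)}).edgeSet).indicator (elen p) e else 0 :=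
        Finset.sum_congr rfl fun e _ => key e
    _ = ((SimpleGraph.fromEdgeSet {s(a, b)}).edgeSet).indicator (elen p) s(a, b) := by
        rw [Finset.sum_ite_eq' Finset.univ (s(a, b))
          (((SimpleGraph.fromEdgeSet {s(a, b)}).edgeSet).indicator (elen p)),
          if_pos (Finset.mem_univ _)]
    _ ≤ elen p s(a, b) := by
        by_cases h : s(a, b) ∈ (SimpleGraph.fromEdgeSet {s(a, b)}).edgeSet
        · rw [Set.indicator_of_mem h]
        · rw [Set.indicator_of_notMem h]; exact elen_nonneg p _
    _ = dist (p a) (p b) := elen_mk p a b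

lemma egLength_sup_edge {E : Type*} [PseudoMetricSpace E] {m : ℕ} (p : Fin m → E)
    (R : SimpleGraph (Fin m)) (a b : Fin m) :
    egLength p (R ⊔ SimpleGraph.fromEdgeSet {s(a, b)}) ≤ egLength p R + dist (p a) (p b) := by
  have h1 := egLength_sup_le p R (SimpleGraph.fromEdgeSet {s(a, b)})
  have h2 := egLength_single_le p a b
  linarith

def avoid {V : Type*} (G : SimpleGraph V) (i : V) : SimpleGraph V where
  Adj u v := G.Adj u v ∧ u ≠ i ∧ v ≠ i
  symm := ⟨fun u v ⟨h, hu, hv⟩ => ⟨h.symm, hv, hu⟩⟩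
  loopless := ⟨fun u h => G.loopless.irrefl u h.1⟩

lemma avoid_le {V : Type*} (G : SimpleGraph V) (i : V) : avoid G i ≤ G := fun _ _ h => h.1

lemma walk_to_nbr {V : Type*} {G : SimpleGraph V} {v t : V} (w : G.Walk v t) :
    v = t ∨ ∃ a, G.Adj t a ∧ (avoid G t).Reachable v a := by
  induction w with
  | nil => exact Or.inl rfl
  | @cons u u' t' h w ih =>
    by_cases hu' : u' = t'
    · subst hu'
      exact Or.inr ⟨u, h.symm, SimpleGraph.Reachable.refl u⟩
    · by_cases hu : u = t'
      · exact Or.inl hu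
      · rcases ih with rfl | ⟨a, hta, har⟩
        · exact absurd rfl hu'
        · exact Or.inr ⟨a, hta,
            (SimpleGraph.Adj.reachable (show (avoid G t').Adj u u' from ⟨h, hu, hu'⟩)).trans har⟩

lemma avoid_edge_sub {V : Type*} (G : SimpleGraph V) (i : V) :
    (avoid G i).edgeSet ⊆ G.edgeSet := SimpleGraph.edgeSet_mono (avoid_le G i)

lemma egLength_avoid_update {E : Type*} [PseudoMetricSpace E] {m : ℕ} (x : Fin m → E)
    (i : Fin m) (z : E) (G : SimpleGraph (Fin m)) :
    egLength (Function.update x i z) (avoid G i) = egLength x (avoid G i) := by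
  rw [egLength_eq, egLength_eq]
  refine Finset.sum_congr rfl fun e _ => ?_
  induction e using Sym2.ind with
  | _ u v =>
    by_cases h : s(u, v) ∈ (avoid G i).edgeSet
    · rw [Set.indicator_of_mem h, Set.indicator_of_mem h, elen_mk, elen_mk]
      have hadj : (avoid G i).Adj u v := ((avoid G i).mem_edgeSet).mp h
      rw [Function.update_of_ne hadj.2.1, Function.update_of_ne hadj.2.2]
    · rw [Set.indicator_of_notMem h, Set.indicator_of_notMem h]

lemma egLength_avoid_add {E : Type*} [PseudoMetricSpace E] {m : ℕ} (p : Fin m → E)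
    (G : SimpleGraph (Fin m)) (i : Fin m) :
    egLength p (avoid G i) + ∑ a ∈ G.neighborFinset i, dist (p i) (p a) ≤ egLength p G := by
  classical
  set I : Finset (Sym2 (Fin m)) := (G.neighborFinset i).image (fun a => s(i, a)) with hI
  have hsub : I ⊆ Finset.univ := Finset.subset_univ I
  have hinj : ∀ a ∈ G.neighborFinset i, ∀ b ∈ G.neighborFinset i,
      (fun a => s(i, a)) a = (fun a => s(i, a)) b → a = b := by
    intro a ha b hb hab
    simp only at hab
    rcases Sym2.eq_iff.mp hab with ⟨_, h2⟩ | ⟨h1, _⟩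
    · exact h2
    · exfalso
      exact (G.adj_comm i b |>.mp ((G.mem_neighborFinset i b).mp hb)).ne
        (h1.symm ▸ rfl)
  -- sum over I of G-indicator equals neighbor sum
  have hIsum : ∑ e ∈ I, (G.edgeSet).indicator (elen p) e
      = ∑ a ∈ G.neighborFinset i, dist (p i) (p a) := by
    rw [hI, Finset.sum_image hinj]
    refine Finset.sum_congr rfl fun a ha => ?_
    have hadj : G.Adj i a := (G.mem_neighborFinset i a).mp ha
    rw [Set.indicator_of_mem ((G.mem_edgeSet).mpr hadj), elen_mk]
  have hsplit : egLength p G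
      = ∑ e ∈ Finset.univ \ I, (G.edgeSet).indicator (elen p) e
        + ∑ e ∈ I, (G.edgeSet).indicator (elen p) e := by
    rw [egLength_eq, Finset.sum_sdiff hsub]
  have hIavoid : ∀ e ∈ I, ((avoid G i).edgeSet).indicator (elen p) e = 0 := by
    intro e he
    rw [hI, Finset.mem_image] at he
    obtain ⟨a, _, rfl⟩ := he
    refine Set.indicator_of_notMem ?_ _
    intro hc
    exact (((avoid G i).mem_edgeSet).mp hc).2.1 rfl
  have havoid : egLength p (avoid G i)
      ≤ ∑ e ∈ Finset.univ \ I, (G.edgeSet).indicator (elen p) e := by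
    rw [egLength_eq, ← Finset.sum_sdiff hsub, Finset.sum_congr rfl hIavoid,
      Finset.sum_const, smul_zero, add_zero]
    refine Finset.sum_le_sum fun e _ => ?_
    by_cases h : e ∈ (avoid G i).edgeSet
    · rw [Set.indicator_of_mem h, Set.indicator_of_mem (avoid_edge_sub G i h)]
    · rw [Set.indicator_of_notMem h]
      exact ind_nonneg p _ e
  linarith

lemma lemE_final {E : Type*} [PseudoMetricSpace E] {n : ℕ} (x : Fin n → E) (z : E)
    (i j : Fin n) (hij : i ≠ j) (SA SB : Finset (Fin n)) (R : SimpleGraph (Fin n))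
    (h1 : ∀ v, ¬ R.Reachable v i → ∃ a ∈ SA, R.Reachable v a)
    (h2 : ∀ v, v ≠ j → ∃ b ∈ SB, R.Reachable v b)
    (hd : ∀ v, ¬ R.Reachable v i → R.Reachable v j)
    (v₀ : Fin n) (hv₀ : ¬ R.Reachable v₀ i) :
    ∃ R' : SimpleGraph (Fin n), R'.Connected ∧
      egLength x R' ≤ egLength x R
        + ((∑ a ∈ SA, dist (x a) z) + ∑ b ∈ SB, dist (x b) z) := by
  have hji : ¬ R.Reachable j i := fun h => hv₀ ((hd v₀ hv₀).trans h)
  obtain ⟨a, haS, har⟩ := h1 j hji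
  obtain ⟨b, hbS, hbr⟩ := h2 i hij
  have hab : a ≠ b := by
    intro h
    exact hji (har.trans (show R.Reachable a i by rw [h]; exact hbr.symm))
  set R' := R ⊔ SimpleGraph.fromEdgeSet {s(a, b)} with hR'
  have hle : R ≤ R' := le_sup_left
  have hadj : R'.Adj a b := by
    refine (SimpleGraph.sup_adj _ _ _ _).mpr (Or.inr ?_)
    rw [SimpleGraph.fromEdgeSet_adj]
    exact ⟨rfl, hab⟩
  have hconn : R'.Connected := by
    rw [SimpleGraph.connected_iff]
    refine ⟨fun u v => ?_, ⟨i⟩⟩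
    have key : ∀ w, R'.Reachable w i := by
      intro w
      by_cases hw : R.Reachable w i
      · exact hw.mono hle
      · exact ((((hd w hw).trans har).mono hle).trans hadj.reachable).trans (hbr.mono hle).symm
    exact (key u).trans (key v).symm
  refine ⟨R', hconn, ?_⟩
  have hlen := egLength_sup_edge x R a b
  have htri : dist (x a) (x b) ≤ dist (x a) z + dist (x b) z := dist_triangle_right _ _ _
  have haa : dist (x a) z ≤ ∑ a' ∈ SA, dist (x a') z :=
    Finset.single_le_sum (fun _ _ => dist_nonneg) haS
  have hbb : dist (x b) z ≤ ∑ b' ∈ SB, dist (x b') z :=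
    Finset.single_le_sum (fun _ _ => dist_nonneg) hbS
  rw [← hR'] at hlen
  linarith

lemma lemE {E : Type*} [PseudoMetricSpace E] {n : ℕ} (x : Fin n → E) (z : E)
    (i j : Fin n) (hij : i ≠ j) :
    ∀ (N : ℕ) (SA SB : Finset (Fin n)) (R : SimpleGraph (Fin n)),
      SA.card ≤ N →
      (∀ v, ¬ R.Reachable v i → ∃ a ∈ SA, R.Reachable v a) →
      (∀ v, v ≠ j → ∃ b ∈ SB, R.Reachable v b) →
      ∃ R' : SimpleGraph (Fin n), R'.Connected ∧
        egLength x R' ≤ egLength x R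
          + ((∑ a ∈ SA, dist (x a) z) + ∑ b ∈ SB, dist (x b) z) := by
  intro N
  induction N with
  | zero =>
    intro SA SB R hcard h1 h2
    by_cases hc : ∀ v, R.Reachable v i
    · refine ⟨R, ?_, ?_⟩
      · rw [SimpleGraph.connected_iff]
        exact ⟨fun u v => (hc u).trans (hc v).symm, ⟨i⟩⟩
      · have hA : (0:ℝ) ≤ ∑ a ∈ SA, dist (x a) z :=
          Finset.sum_nonneg fun _ _ => dist_nonneg
        have hB : (0:ℝ) ≤ ∑ b ∈ SB, dist (x b) z :=
          Finset.sum_nonneg fun _ _ => dist_nonneg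
        linarith
    · push_neg at hc
      obtain ⟨v₀, hv₀⟩ := hc
      by_cases hd : ∀ v, ¬ R.Reachable v i → R.Reachable v j
      · exact lemE_final x z i j hij SA SB R h1 h2 hd v₀ hv₀
      · push_neg at hd
        obtain ⟨v₁, hv₁i, hv₁j⟩ := hd
        obtain ⟨a, haS, _⟩ := h1 v₁ hv₁i
        have hSA : SA = ∅ := Finset.card_eq_zero.mp (Nat.le_zero.mp hcard)
        rw [hSA] at haS
        exact absurd haS (Finset.notMem_empty a)
  | succ N ih =>
    intro SA SB R hcard h1 h2
    by_cases hc : ∀ v, R.Reachable v i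
    · refine ⟨R, ?_, ?_⟩
      · rw [SimpleGraph.connected_iff]
        exact ⟨fun u v => (hc u).trans (hc v).symm, ⟨i⟩⟩
      · have hA : (0:ℝ) ≤ ∑ a ∈ SA, dist (x a) z :=
          Finset.sum_nonneg fun _ _ => dist_nonneg
        have hB : (0:ℝ) ≤ ∑ b ∈ SB, dist (x b) z :=
          Finset.sum_nonneg fun _ _ => dist_nonneg
        linarith
    · push_neg at hc
      obtain ⟨v₀, hv₀⟩ := hc
      by_cases hd : ∀ v, ¬ R.Reachable v i → R.Reachable v j
      · exact lemE_final x z i j hij SA SB R h1 h2 hd v₀ hv₀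
      · push_neg at hd
        obtain ⟨v₁, hv₁i, hv₁j⟩ := hd
        obtain ⟨a, haS, har⟩ := h1 v₁ hv₁i
        obtain ⟨b, hbS, hbr⟩ := h2 i hij
        have hab : a ≠ b := by
          intro h
          exact hv₁i (har.trans (show R.Reachable a i by rw [h]; exact hbr.symm))
        set R' := R ⊔ SimpleGraph.fromEdgeSet {s(a, b)} with hR'
        have hle : R ≤ R' := le_sup_left
        have hadj : R'.Adj a b := by
          refine (SimpleGraph.sup_adj _ _ _ _).mpr (Or.inr ?_)
          rw [SimpleGraph.fromEdgeSet_adj]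
          exact ⟨rfl, hab⟩
        have h1' : ∀ v, ¬ R'.Reachable v i → ∃ a' ∈ SA.erase a, R'.Reachable v a' := by
          intro v hv
          have hvR : ¬ R.Reachable v i := fun h => hv (h.mono hle)
          obtain ⟨a', ha'S, ha'r⟩ := h1 v hvR
          have hane : a' ≠ a := by
            rintro rfl
            exact hv (((ha'r.mono hle).trans hadj.reachable).trans (hbr.mono hle).symm)
          exact ⟨a', Finset.mem_erase.mpr ⟨hane, ha'S⟩, ha'r.mono hle⟩
        have h2' : ∀ v, v ≠ j → ∃ b' ∈ SB.erase b, R'.Reachable v b' := by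
          intro v hvj
          obtain ⟨b', hb'S, hb'r⟩ := h2 v hvj
          by_cases hbb : b' = b
          · have hv₁j' : v₁ ≠ j := by
              rintro rfl
              exact hv₁j (SimpleGraph.Reachable.refl v₁)
            obtain ⟨b₁, hb₁S, hb₁r⟩ := h2 v₁ hv₁j'
            have hb₁ne : b₁ ≠ b := by
              intro h
              exact hv₁i (hb₁r.trans (show R.Reachable b₁ i by rw [h]; exact hbr.symm) )
            refine ⟨b₁, Finset.mem_erase.mpr ⟨hb₁ne, hb₁S⟩, ?_⟩
            have step1 : R'.Reachable v b := by rw [← hbb]; exact hb'r.mono hle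
            exact ((step1.trans hadj.reachable.symm).trans (har.mono hle).symm).trans
              (hb₁r.mono hle)
          · exact ⟨b', Finset.mem_erase.mpr ⟨hbb, hb'S⟩, hb'r.mono hle⟩
        have hcard' : (SA.erase a).card ≤ N := by
          have := Finset.card_erase_of_mem haS
          omega
        obtain ⟨R'', hconn, hlen⟩ := ih (SA.erase a) (SB.erase b) R' hcard' h1' h2'
        refine ⟨R'', hconn, ?_⟩
        have hsup := egLength_sup_edge x R a b
        rw [← hR'] at hsup
        have htri : dist (x a) (x b) ≤ dist (x a) z + dist (x b) z :=
          dist_triangle_right _ _ _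
        have hAsum : dist (x a) z + ∑ a' ∈ SA.erase a, dist (x a') z
            = ∑ a' ∈ SA, dist (x a') z := Finset.add_sum_erase _ (fun a' => dist (x a') z) haS
        have hBsum : dist (x b) z + ∑ b' ∈ SB.erase b, dist (x b') z
            = ∑ b' ∈ SB, dist (x b') z := Finset.add_sum_erase _ (fun b' => dist (x b') z) hbS
        linarith

lemma core {E : Type*} [PseudoMetricSpace E] {n : ℕ} (x : Fin n → E) (z : E)
    (i j : Fin n) (hij : i ≠ j)
    (Gi Gj : SimpleGraph (Fin n)) (hGi : Gi.Connected) (hGj : Gj.Connected) :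
    mstLength x ≤ egLength (Function.update x i z) Gi
      + egLength (Function.update x j z) Gj := by
  set R := avoid Gi i ⊔ avoid Gj j with hR
  have h1 : ∀ v, ¬ R.Reachable v i → ∃ a ∈ Gi.neighborFinset i, R.Reachable v a := by
    intro v hv
    obtain ⟨w⟩ := hGi.preconnected v i
    rcases walk_to_nbr w with rfl | ⟨a, hia, har⟩
    · exact absurd (SimpleGraph.Reachable.refl v) hv
    · exact ⟨a, (Gi.mem_neighborFinset i a).mpr hia,
        har.mono (le_sup_left : avoid Gi i ≤ R)⟩
  have h2 : ∀ v, v ≠ j → ∃ b ∈ Gj.neighborFinset j, R.Reachable v b := by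
    intro v hvj
    obtain ⟨w⟩ := hGj.preconnected v j
    rcases walk_to_nbr w with rfl | ⟨b, hjb, hbr⟩
    · exact absurd rfl hvj
    · exact ⟨b, (Gj.mem_neighborFinset j b).mpr hjb,
        hbr.mono (le_sup_right : avoid Gj j ≤ R)⟩
  obtain ⟨R', hconn, hlen⟩ := lemE x z i j hij (Gi.neighborFinset i).card
    (Gi.neighborFinset i) (Gj.neighborFinset j) R le_rfl h1 h2
  have hmst : mstLength x ≤ egLength x R' := by
    apply csInf_le
    · refine ⟨0, fun t ht => ?_⟩
      obtain ⟨G, _, rfl⟩ := ht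
      exact egLength_nonneg x G
    · exact ⟨R', hconn, rfl⟩
  have hsplit : egLength x R ≤ egLength x (avoid Gi i) + egLength x (avoid Gj j) :=
    egLength_sup_le x _ _
  have hi : egLength x (avoid Gi i) + ∑ a ∈ Gi.neighborFinset i, dist (x a) z
      ≤ egLength (Function.update x i z) Gi := by
    have h := egLength_avoid_add (Function.update x i z) Gi i
    rw [egLength_avoid_update] at h
    have hcg : ∑ a ∈ Gi.neighborFinset i,
        dist (Function.update x i z i) (Function.update x i z a)
        = ∑ a ∈ Gi.neighborFinset i, dist (x a) z := by
      refine Finset.sum_congr rfl fun a ha => ?_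
      have hne : a ≠ i := ((Gi.mem_neighborFinset i a).mp ha).ne'
      rw [Function.update_self, Function.update_of_ne hne, dist_comm]
    rw [hcg] at h
    exact h
  have hj : egLength x (avoid Gj j) + ∑ b ∈ Gj.neighborFinset j, dist (x b) z
      ≤ egLength (Function.update x j z) Gj := by
    have h := egLength_avoid_add (Function.update x j z) Gj j
    rw [egLength_avoid_update] at h
    have hcg : ∑ b ∈ Gj.neighborFinset j,
        dist (Function.update x j z j) (Function.update x j z b)
        = ∑ b ∈ Gj.neighborFinset j, dist (x b) z := by
      refine Finset.sum_congr rfl fun b hb => ?_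
      have hne : b ≠ j := ((Gj.mem_neighborFinset j b).mp hb).ne'
      rw [Function.update_self, Function.update_of_ne hne, dist_comm]
    rw [hcg] at h
    exact h
  linarith


/-- For the minimum-spanning-tree `n`-distance on `ℝ^q`, one
has `n·d(x₁,…,xₙ) ≤ 2·Σᵢ d(x₁,…,xₙ)ᵢᶻ` for all points; consequently the
best constant satisfies `K*_n ≤ 2/n`. -/
theorem mstLength_upper_bound (q n : ℕ) (hq : 2 ≤ q) (hn : 2 ≤ n)
    (x : Fin n → EuclideanSpace ℝ (Fin q)) (z : EuclideanSpace ℝ (Fin q)) :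
    (n : ℝ) * mstLength x ≤ 2 * ∑ i : Fin n, mstLength (Function.update x i z) := by
  haveI : Nonempty (Fin n) := ⟨⟨0, by omega⟩⟩
  have htop : (⊤ : SimpleGraph (Fin n)).Connected := by
    rw [SimpleGraph.connected_iff]
    refine ⟨fun u v => ?_, inferInstance⟩
    by_cases h : u = v
    · rw [h]
    · exact SimpleGraph.Adj.reachable (by simpa using h)
  set L : Fin n → ℝ := fun i => mstLength (Function.update x i z) with hLdef
  have hpair : ∀ i j : Fin n, i ≠ j → mstLength x ≤ L i + L j := by
    intro i j hij
    refine le_of_forall_pos_le_add fun ε hε => ?_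
    have hSiN : {t : ℝ | ∃ G : SimpleGraph (Fin n), G.Connected
        ∧ t = egLength (Function.update x i z) G}.Nonempty :=
      ⟨_, ⊤, htop, rfl⟩
    have hSjN : {t : ℝ | ∃ G : SimpleGraph (Fin n), G.Connected
        ∧ t = egLength (Function.update x j z) G}.Nonempty :=
      ⟨_, ⊤, htop, rfl⟩
    have hlti : sInf {t : ℝ | ∃ G : SimpleGraph (Fin n), G.Connected
        ∧ t = egLength (Function.update x i z) G}
        < sInf {t : ℝ | ∃ G : SimpleGraph (Fin n), G.Connected
        ∧ t = egLength (Function.update x i z) G} + ε / 2 := by linarith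
    have hltj : sInf {t : ℝ | ∃ G : SimpleGraph (Fin n), G.Connected
        ∧ t = egLength (Function.update x j z) G}
        < sInf {t : ℝ | ∃ G : SimpleGraph (Fin n), G.Connected
        ∧ t = egLength (Function.update x j z) G} + ε / 2 := by linarith
    obtain ⟨ti, ⟨Gi, hGic, rfl⟩, hti⟩ := exists_lt_of_csInf_lt hSiN hlti
    obtain ⟨tj, ⟨Gj, hGjc, rfl⟩, htj⟩ := exists_lt_of_csInf_lt hSjN hltj
    have hcore := core x z i j hij Gi Gj hGic hGjc
    have hLi : L i = sInf {t : ℝ | ∃ G : SimpleGraph (Fin n), G.Connected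
        ∧ t = egLength (Function.update x i z) G} := rfl
    have hLj : L j = sInf {t : ℝ | ∃ G : SimpleGraph (Fin n), G.Connected
        ∧ t = egLength (Function.update x j z) G} := rfl
    rw [hLi, hLj]
    linarith
  set d := mstLength x with hd
  have key : ∀ i : Fin n, ((n : ℝ) - 1) * d
      ≤ ((n : ℝ) - 1) * L i + ((∑ k : Fin n, L k) - L i) := by
    intro i
    have hs : ∑ j ∈ Finset.univ.erase i, d ≤ ∑ j ∈ Finset.univ.erase i, (L i + L j) := by
      refine Finset.sum_le_sum fun j hj => ?_
      exact hpair i j (Ne.symm (Finset.mem_erase.mp hj).1)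
    rw [Finset.sum_const, Finset.card_erase_of_mem (Finset.mem_univ i), Finset.card_univ,
      Fintype.card_fin, Finset.sum_add_distrib, Finset.sum_const,
      Finset.card_erase_of_mem (Finset.mem_univ i), Finset.card_univ, Fintype.card_fin,
      Finset.sum_erase_eq_sub (Finset.mem_univ i), nsmul_eq_mul, nsmul_eq_mul,
      Nat.cast_sub (by omega : 1 ≤ n), Nat.cast_one] at hs
    linarith
  have hsum := Finset.sum_le_sum (fun i (_ : i ∈ Finset.univ) => key i)
  rw [Finset.sum_const, Finset.card_univ, Fintype.card_fin, nsmul_eq_mul,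
    Finset.sum_add_distrib, Finset.sum_sub_distrib, ← Finset.mul_sum,
    Finset.sum_const, Finset.card_univ, Fintype.card_fin, nsmul_eq_mul] at hsum
  set S := ∑ k : Fin n, L k with hS
  have hn' : (2:ℝ) ≤ (n:ℝ) := by exact_mod_cast hn
  have e1 : ((n:ℝ) - 1) * ((n:ℝ) * d) = (n:ℝ) * (((n:ℝ) - 1) * d) := by ring
  have h2 : ((n:ℝ) - 1) * ((n:ℝ) * d) ≤ ((n:ℝ) - 1) * (2 * S) := by
    rw [e1]
    have e2 : ((n:ℝ) - 1) * (2 * S) = ((n:ℝ) - 1) * S + ((n:ℝ) * S - S) := by ring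
    linarith
  have hpos : (0:ℝ) < (n:ℝ) - 1 := by linarith
  have := le_of_mul_le_mul_left h2 hpos
  simpa [hS] using this
end

section
/- Let n ≥ 2 be an integer. The map st : (ℝ²)^n → ℝ carrying (x1,...,xn) to the length of a Euclidean Steiner tree on x1,...,xn is an n-distance on ℝ²: st(x1,...,xn) = 0 if and only if x1 = ⋯ = xn, st is symmetric in its arguments, and st(x1,...,xn) ≤ Σ_{i=1}^n st(x1,...,xn)_i^z for all x1,...,xn,z ∈ ℝ². -/
open scoped Classical

/-- The Euclidean Steiner tree length of the points `x 0, …, x (n-1)` of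
`ℝ²`: the infimum, over all finite families of auxiliary (Steiner) points,
of the minimum spanning tree length of the augmented configuration. -/
noncomputable def steinerLength {n : ℕ} (x : Fin n → EuclideanSpace ℝ (Fin 2)) : ℝ :=
  sInf {t : ℝ | ∃ (m : ℕ) (y : Fin m → EuclideanSpace ℝ (Fin 2)),
    t = mstLength (Fin.append x y)}

namespace SteinerAux

variable {E : Type*} [PseudoMetricSpace E]

/-- The edge-weight function. -/
noncomputable def ew {m : ℕ} (p : Fin m → E) : Sym2 (Fin m) → ℝ :=
  Sym2.lift ⟨fun i j => dist (p i) (p j), fun i j => dist_comm _ _⟩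

lemma ew_mk {m : ℕ} (p : Fin m → E) (u v : Fin m) : ew p s(u, v) = dist (p u) (p v) := rfl

lemma ew_nonneg {m : ℕ} (p : Fin m → E) (e : Sym2 (Fin m)) : 0 ≤ ew p e := by
  induction e using Sym2.ind with
  | _ u v => rw [ew_mk]; exact dist_nonneg

lemma egLength_def {m : ℕ} (p : Fin m → E) (G : SimpleGraph (Fin m)) :
    egLength p G = ∑ e : Sym2 (Fin m), if e ∈ G.edgeSet then ew p e else 0 := rfl

lemma egLength_nonneg {m : ℕ} (p : Fin m → E) (G : SimpleGraph (Fin m)) :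
    0 ≤ egLength p G := by
  rw [egLength_def]
  refine Finset.sum_nonneg fun e _ => ?_
  by_cases h : e ∈ G.edgeSet <;> simp [h, ew_nonneg]

lemma egLength_eq_zero {m : ℕ} (p : Fin m → E) (G : SimpleGraph (Fin m))
    (h : ∀ u v, G.Adj u v → p u = p v) : egLength p G = 0 := by
  rw [egLength_def]
  refine Finset.sum_eq_zero fun e _ => ?_
  induction e using Sym2.ind with
  | _ u v =>
    by_cases he : s(u, v) ∈ G.edgeSet
    · rw [if_pos he, ew_mk, h u v (G.mem_edgeSet.mp he), dist_self]
    · rw [if_neg he]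

lemma egLength_sup_le {m : ℕ} (p : Fin m → E) (G H : SimpleGraph (Fin m)) :
    egLength p (G ⊔ H) ≤ egLength p G + egLength p H := by
  rw [egLength_def, egLength_def, egLength_def, ← Finset.sum_add_distrib]
  refine Finset.sum_le_sum fun e _ => ?_
  by_cases hG : e ∈ G.edgeSet
  · by_cases hH : e ∈ H.edgeSet
    · simp only [SimpleGraph.edgeSet_sup, Set.mem_union, hG, hH, true_or, if_true, if_pos]
      linarith [ew_nonneg p e]
    · simp [SimpleGraph.edgeSet_sup, hG, hH]
  · by_cases hH : e ∈ H.edgeSet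
    · simp [SimpleGraph.edgeSet_sup, hG, hH]
    · simp [SimpleGraph.edgeSet_sup, hG, hH]

/-- A graph homomorphism from `G` to `G.map f`. -/
def mapHom {V W : Type*} (f : V ↪ W) (G : SimpleGraph V) : G →g G.map f :=
  ⟨f, fun h => SimpleGraph.map_adj_apply.mpr h⟩

lemma mem_map_edge {a M : ℕ} (f : Fin a ↪ Fin M) (G : SimpleGraph (Fin a))
    (e : Sym2 (Fin M)) (hmem : e ∈ (G.map f).edgeSet) :
    ∃ e₀ : Sym2 (Fin a), Sym2.map f e₀ = e := by
  induction e using Sym2.ind with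
  | _ u v =>
    obtain ⟨u', v', _, hu, hv⟩ := (SimpleGraph.map_adj f G u v).mp hmem
    exact ⟨s(u', v'), by rw [Sym2.map_pair_eq, hu, hv]⟩

lemma egLength_map {a M : ℕ} (p : Fin M → E) (f : Fin a ↪ Fin M) (G : SimpleGraph (Fin a)) :
    egLength p (G.map f) = egLength (p ∘ f) G := by
  have hinj : Function.Injective (Sym2.map f) := Sym2.map.injective f.injective
  rw [egLength_def, egLength_def]
  refine Eq.trans ((Finset.sum_subset
      (Finset.subset_univ (Finset.univ.map ⟨Sym2.map f, hinj⟩)) ?_).symm) ?_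
  · intro e _ he
    rw [if_neg]
    intro hmem
    obtain ⟨e₀, he₀⟩ := mem_map_edge f G e hmem
    exact he (Finset.mem_map.mpr ⟨e₀, Finset.mem_univ _, he₀⟩)
  · rw [Finset.sum_map]
    refine Finset.sum_congr rfl fun e _ => ?_
    induction e using Sym2.ind with
    | _ u v =>
      simp only [Function.Embedding.coeFn_mk, Sym2.map_pair_eq]
      by_cases h : G.Adj u v
      · rw [if_pos (((G.map f).mem_edgeSet).mpr (SimpleGraph.map_adj_apply.mpr h)),
          if_pos (G.mem_edgeSet.mpr h)]
        rfl
      · rw [if_neg, if_neg]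
        · exact fun hc => h (G.mem_edgeSet.mp hc)
        · exact fun hc =>
            h (SimpleGraph.map_adj_apply.mp (((G.map f).mem_edgeSet).mp hc))

lemma dist_le_walk_sum {m : ℕ} (pts : Fin m → E) {G : SimpleGraph (Fin m)} {u v : Fin m}
    (w : G.Walk u v) : dist (pts u) (pts v) ≤ (w.edges.map (ew pts)).sum := by
  induction w with
  | nil => simp
  | @cons a b c hadj tail ih =>
    rw [SimpleGraph.Walk.edges_cons, List.map_cons, List.sum_cons, ew_mk]
    exact (dist_triangle (pts a) (pts b) (pts c)).trans (add_le_add le_rfl ih)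

lemma dist_le_egLength {m : ℕ} (pts : Fin m → E) {G : SimpleGraph (Fin m)}
    (hG : G.Connected) (u v : Fin m) : dist (pts u) (pts v) ≤ egLength pts G := by
  obtain ⟨wlk⟩ := hG.preconnected u v
  have hnodup : (wlk.toPath : G.Walk u v).edges.Nodup :=
    (wlk.toPath).property.isTrail.edges_nodup
  calc dist (pts u) (pts v)
      ≤ ((wlk.toPath : G.Walk u v).edges.map (ew pts)).sum := dist_le_walk_sum pts _
    _ = ∑ e ∈ (wlk.toPath : G.Walk u v).edges.toFinset, ew pts e :=
        (List.sum_toFinset _ hnodup).symm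
    _ = ∑ e ∈ (wlk.toPath : G.Walk u v).edges.toFinset,
          (if e ∈ G.edgeSet then ew pts e else 0) := by
        refine Finset.sum_congr rfl fun e he => ?_
        rw [if_pos ((wlk.toPath : G.Walk u v).edges_subset_edgeSet (List.mem_toFinset.mp he))]
    _ ≤ ∑ e : Sym2 (Fin m), (if e ∈ G.edgeSet then ew pts e else 0) := by
        refine Finset.sum_le_sum_of_subset_of_nonneg (Finset.subset_univ _) ?_
        intro e _ _
        by_cases h : e ∈ G.edgeSet <;> simp [h, ew_nonneg]
    _ = egLength pts G := (egLength_def pts G).symm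

lemma mstLength_le {m : ℕ} (pts : Fin m → E) {G : SimpleGraph (Fin m)} (hG : G.Connected) :
    mstLength pts ≤ egLength pts G :=
  csInf_le ⟨0, by rintro t ⟨G', -, rfl⟩; exact egLength_nonneg _ _⟩ ⟨G, hG, rfl⟩

lemma mstLength_nonneg {m : ℕ} (pts : Fin m → E) : 0 ≤ mstLength pts :=
  Real.sInf_nonneg (by rintro t ⟨G, -, rfl⟩; exact egLength_nonneg _ _)

lemma dist_le_mstLength {m : ℕ} (pts : Fin m → E) (u v : Fin m) :
    dist (pts u) (pts v) ≤ mstLength pts := by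
  haveI : Nonempty (Fin m) := ⟨u⟩
  refine le_csInf ⟨egLength pts ⊤, ⊤, SimpleGraph.connected_top, rfl⟩ ?_
  rintro t ⟨G, hG, rfl⟩
  exact dist_le_egLength pts hG u v

lemma connected_map_equiv {V W : Type*} (π : V ≃ W) {G : SimpleGraph V} (hG : G.Connected) :
    (G.map π.toEmbedding).Connected :=
  SimpleGraph.Connected.map (mapHom π.toEmbedding G)
    (fun w => ⟨π.symm w, Equiv.apply_symm_apply π w⟩) hG

lemma mstLength_comp_equiv {m : ℕ} (pts : Fin m → E) (π : Fin m ≃ Fin m) :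
    mstLength (pts ∘ π) = mstLength pts := by
  unfold mstLength
  congr 1
  ext t
  constructor
  · rintro ⟨G, hG, rfl⟩
    refine ⟨G.map π.toEmbedding, connected_map_equiv π hG, ?_⟩
    rw [egLength_map]
    congr 1
  · rintro ⟨G, hG, rfl⟩
    refine ⟨G.map π.symm.toEmbedding, connected_map_equiv π.symm hG, ?_⟩
    rw [egLength_map]
    congr 1
    funext i
    simp

/-- The left embedding `Fin a ↪ Fin (a + b)`. -/
def castAddE (a b : ℕ) : Fin a ↪ Fin (a + b) :=
  ⟨fun i => Fin.castAdd b i, fun i j h => by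
    have := congrArg Fin.val h
    simp only [Fin.coe_castAdd] at this
    exact Fin.ext this⟩

/-- The right embedding `Fin b ↪ Fin (a + b)`. -/
def natAddE (a b : ℕ) : Fin b ↪ Fin (a + b) :=
  ⟨fun j => Fin.natAdd a j, fun i j h => by
    have := congrArg Fin.val h
    simp only [Fin.coe_natAdd] at this
    exact Fin.ext (by omega)⟩

@[simp] lemma castAddE_apply (a b : ℕ) (i : Fin a) : castAddE a b i = Fin.castAdd b i := rfl
@[simp] lemma natAddE_apply (a b : ℕ) (j : Fin b) : natAddE a b j = Fin.natAdd a j := rfl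

lemma castAdd_ne_natAdd {a b : ℕ} (i : Fin a) (j : Fin b) :
    Fin.castAdd b i ≠ Fin.natAdd a j := by
  intro h
  have := congrArg Fin.val h
  simp only [Fin.coe_castAdd, Fin.coe_natAdd] at this
  omega

/-- A configuration `p` admits a connected graph of total length at most `c`. -/
def Ok {a : ℕ} (p : Fin a → E) (c : ℝ) : Prop :=
  ∃ G : SimpleGraph (Fin a), G.Connected ∧ egLength p G ≤ c

lemma Ok.attach {a b : ℕ} {p : Fin a → E} {q : Fin b → E} {c : ℝ}
    (hq : Ok q c) (hcov : ∀ i : Fin a, ∃ j : Fin b, q j = p i) :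
    Ok (Fin.append p q) c := by
  obtain ⟨H, hH, hlen⟩ := hq
  choose sel hsel using hcov
  set Z : SimpleGraph (Fin (a + b)) :=
    SimpleGraph.fromEdgeSet
      {e | ∃ i : Fin a, e = s(Fin.castAdd b i, Fin.natAdd a (sel i))} with hZdef
  refine ⟨H.map (natAddE a b) ⊔ Z, ?_, ?_⟩
  · obtain ⟨j₀⟩ := hH.nonempty
    haveI : Nonempty (Fin (a + b)) := ⟨Fin.natAdd a j₀⟩
    have hrr : ∀ j j' : Fin b,
        (H.map (natAddE a b) ⊔ Z).Reachable (Fin.natAdd a j) (Fin.natAdd a j') := by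
      intro j j'
      have h1 := (hH.preconnected j j').map (mapHom (natAddE a b) H)
      exact SimpleGraph.Reachable.mono le_sup_left h1
    have hto : ∀ w : Fin (a + b),
        (H.map (natAddE a b) ⊔ Z).Reachable w (Fin.natAdd a j₀) := by
      intro w
      refine Fin.addCases (fun i => ?_) (fun j => hrr j j₀) w
      have hadj : Z.Adj (Fin.castAdd b i) (Fin.natAdd a (sel i)) := by
        rw [hZdef, SimpleGraph.fromEdgeSet_adj]
        exact ⟨⟨i, rfl⟩, castAdd_ne_natAdd i (sel i)⟩
      exact (SimpleGraph.Reachable.mono le_sup_right hadj.reachable).trans (hrr (sel i) j₀)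
    exact ⟨fun u v => (hto u).trans (hto v).symm⟩
  · have h1 : egLength (Fin.append p q) (H.map (natAddE a b)) = egLength q H := by
      rw [egLength_map]
      congr 1
      funext j
      simp [Fin.append_right]
    have h2 : egLength (Fin.append p q) Z = 0 := by
      refine egLength_eq_zero _ _ ?_
      intro u v huv
      rw [hZdef, SimpleGraph.fromEdgeSet_adj] at huv
      obtain ⟨⟨i, he⟩, -⟩ := huv
      rw [Sym2.eq_iff] at he
      rcases he with ⟨hu, hv⟩ | ⟨hu, hv⟩ <;> subst hu <;> subst hv <;>
        simp [Fin.append_left, Fin.append_right, hsel]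
    calc egLength (Fin.append p q) (H.map (natAddE a b) ⊔ Z)
        ≤ egLength (Fin.append p q) (H.map (natAddE a b)) + egLength (Fin.append p q) Z :=
          egLength_sup_le _ _ _
      _ = egLength q H := by rw [h1, h2, add_zero]
      _ ≤ c := hlen

lemma Ok.pair {a b : ℕ} {p : Fin a → E} {q : Fin b → E} {c d : ℝ}
    (hp : Ok p c) (hq : Ok q d) (i0 : Fin a) (j0 : Fin b) (hshare : p i0 = q j0) :
    Ok (Fin.append p q) (c + d) := by
  obtain ⟨G, hG, hGl⟩ := hp
  obtain ⟨H, hH, hHl⟩ := hq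
  set Z : SimpleGraph (Fin (a + b)) :=
    SimpleGraph.fromEdgeSet {s(Fin.castAdd b i0, Fin.natAdd a j0)} with hZdef
  refine ⟨G.map (castAddE a b) ⊔ (H.map (natAddE a b) ⊔ Z), ?_, ?_⟩
  · haveI : Nonempty (Fin (a + b)) := ⟨Fin.castAdd b i0⟩
    have hcross : Z.Adj (Fin.castAdd b i0) (Fin.natAdd a j0) := by
      rw [hZdef, SimpleGraph.fromEdgeSet_adj]
      exact ⟨rfl, castAdd_ne_natAdd i0 j0⟩
    have hll : ∀ i : Fin a,
        (G.map (castAddE a b) ⊔ (H.map (natAddE a b) ⊔ Z)).Reachable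
          (Fin.castAdd b i) (Fin.castAdd b i0) := by
      intro i
      have h1 := (hG.preconnected i i0).map (mapHom (castAddE a b) G)
      exact SimpleGraph.Reachable.mono le_sup_left h1
    have hrr : ∀ j : Fin b,
        (G.map (castAddE a b) ⊔ (H.map (natAddE a b) ⊔ Z)).Reachable
          (Fin.natAdd a j) (Fin.natAdd a j0) := by
      intro j
      have h1 := (hH.preconnected j j0).map (mapHom (natAddE a b) H)
      exact SimpleGraph.Reachable.mono (le_sup_left.trans le_sup_right) h1
    have hto : ∀ w : Fin (a + b),
        (G.map (castAddE a b) ⊔ (H.map (natAddE a b) ⊔ Z)).Reachable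
          w (Fin.castAdd b i0) := by
      intro w
      refine Fin.addCases (fun i => hll i) (fun j => ?_) w
      exact (hrr j).trans
        (SimpleGraph.Reachable.mono (le_sup_right.trans le_sup_right)
          hcross.reachable).symm
    exact ⟨fun u v => (hto u).trans (hto v).symm⟩
  · have h1 : egLength (Fin.append p q) (G.map (castAddE a b)) = egLength p G := by
      rw [egLength_map]
      congr 1
      funext i
      simp [Fin.append_left]
    have h2 : egLength (Fin.append p q) (H.map (natAddE a b)) = egLength q H := by
      rw [egLength_map]
      congr 1
      funext j
      simp [Fin.append_right]
    have h3 : egLength (Fin.append p q) Z = 0 := by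
      refine egLength_eq_zero _ _ ?_
      intro u v huv
      rw [hZdef, SimpleGraph.fromEdgeSet_adj] at huv
      obtain ⟨he, -⟩ := huv
      rw [Set.mem_singleton_iff, Sym2.eq_iff] at he
      rcases he with ⟨hu, hv⟩ | ⟨hu, hv⟩ <;> subst hu <;> subst hv <;>
        simp [Fin.append_left, Fin.append_right, hshare]
    calc egLength (Fin.append p q) (G.map (castAddE a b) ⊔ (H.map (natAddE a b) ⊔ Z))
        ≤ egLength (Fin.append p q) (G.map (castAddE a b)) +
            egLength (Fin.append p q) (H.map (natAddE a b) ⊔ Z) := egLength_sup_le _ _ _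
      _ ≤ egLength (Fin.append p q) (G.map (castAddE a b)) +
            (egLength (Fin.append p q) (H.map (natAddE a b)) +
              egLength (Fin.append p q) Z) :=
          add_le_add le_rfl (egLength_sup_le _ _ _)
      _ = egLength p G + egLength q H := by rw [h1, h2, h3, add_zero]
      _ ≤ c + d := add_le_add hGl hHl

lemma glue_family {ι : Type*} (z : E) (A : ι → ℕ) (C : ∀ i, Fin (A i) → E) (c : ι → ℝ)
    (s : Finset ι) (hOk : ∀ i ∈ s, Ok (C i) (c i)) (hz : ∀ i ∈ s, ∃ j, C i j = z) :
    ∃ (b : ℕ) (q : Fin b → E), Ok q (∑ i ∈ s, c i) ∧ (∃ j, q j = z) ∧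
      (∀ i ∈ s, ∀ k, ∃ j, q j = C i k) := by
  classical
  induction s using Finset.induction_on with
  | empty =>
    refine ⟨1, fun _ => z, ⟨⊥, ?_, ?_⟩, ⟨0, rfl⟩, by simp⟩
    · constructor
      intro u v
      rw [Subsingleton.elim u v]
    · rw [Finset.sum_empty]
      exact le_of_eq (egLength_eq_zero _ _ (fun u v h => absurd h (by simp)))
  | @insert i s hnotmem ih =>
    obtain ⟨b, q, hOkq, ⟨jz, hjz⟩, hcov⟩ :=
      ih (fun i' hi' => hOk i' (Finset.mem_insert_of_mem hi'))
        (fun i' hi' => hz i' (Finset.mem_insert_of_mem hi'))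
    obtain ⟨ji, hji⟩ := hz i (Finset.mem_insert_self i s)
    have hpair : Ok (Fin.append (C i) q) (c i + ∑ i' ∈ s, c i') :=
      Ok.pair (hOk i (Finset.mem_insert_self i s)) hOkq ji jz (by rw [hji, hjz])
    refine ⟨A i + b, Fin.append (C i) q, ?_, ?_, ?_⟩
    · rw [Finset.sum_insert hnotmem]
      exact hpair
    · exact ⟨Fin.natAdd (A i) jz, by rw [Fin.append_right, hjz]⟩
    · intro i' hi' k
      rcases Finset.mem_insert.mp hi' with rfl | hi'
      · exact ⟨Fin.castAdd b k, by rw [Fin.append_left]⟩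
      · obtain ⟨j, hj⟩ := hcov i' hi' k
        exact ⟨Fin.natAdd (A i) j, by rw [Fin.append_right, hj]⟩

/-! ### Steiner length specific lemmas -/

local notation "Pt" => EuclideanSpace ℝ (Fin 2)

lemma steiner_nonneg {n : ℕ} (x : Fin n → Pt) : 0 ≤ steinerLength x :=
  Real.sInf_nonneg (by rintro t ⟨m, y, rfl⟩; exact mstLength_nonneg _)

lemma steiner_le {n : ℕ} (x : Fin n → Pt) {m : ℕ} (y : Fin m → Pt) :
    steinerLength x ≤ mstLength (Fin.append x y) :=
  csInf_le ⟨0, by rintro t ⟨m', y', rfl⟩; exact mstLength_nonneg _⟩ ⟨m, y, rfl⟩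

lemma Ok.steiner {n m : ℕ} {x : Fin n → Pt} {y : Fin m → Pt} {c : ℝ}
    (h : Ok (Fin.append x y) c) : steinerLength x ≤ c := by
  obtain ⟨G, hG, hl⟩ := h
  exact (steiner_le x y).trans ((mstLength_le _ hG).trans hl)

lemma dist_le_steiner {n : ℕ} (x : Fin n → Pt) (i j : Fin n) :
    dist (x i) (x j) ≤ steinerLength x := by
  refine le_csInf ⟨mstLength (Fin.append x Fin.elim0), 0, Fin.elim0, rfl⟩ ?_
  rintro t ⟨m, y, rfl⟩
  have h := dist_le_mstLength (Fin.append x y) (Fin.castAdd m i) (Fin.castAdd m j)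
  rwa [Fin.append_left, Fin.append_left] at h

lemma append_comp_perm {α : Type*} {n m : ℕ} (x : Fin n → α) (y : Fin m → α)
    (σ : Equiv.Perm (Fin n)) :
    ∃ π : Equiv.Perm (Fin (n + m)), Fin.append (x ∘ σ) y = (Fin.append x y) ∘ π := by
  refine ⟨finSumFinEquiv.symm.trans ((σ.sumCongr (Equiv.refl (Fin m))).trans finSumFinEquiv), ?_⟩
  funext w
  refine Fin.addCases (fun i => ?_) (fun j => ?_) w
  · simp [Fin.append_left, Equiv.sumCongr_apply]
  · simp [Fin.append_right, Equiv.sumCongr_apply]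

lemma mst_append_perm {n m : ℕ} (x : Fin n → Pt) (y : Fin m → Pt) (σ : Equiv.Perm (Fin n)) :
    mstLength (Fin.append (x ∘ σ) y) = mstLength (Fin.append x y) := by
  obtain ⟨π, hπ⟩ := append_comp_perm x y σ
  rw [hπ, mstLength_comp_equiv]

end SteinerAux

open SteinerAux

/-- The map `(x₁,…,xₙ) ↦` Euclidean Steiner tree length is an
`n`-distance on `ℝ²`: it vanishes exactly on constant tuples, it is
symmetric, and it satisfies the simplex inequality. -/
theorem steinerLength_is_n_distance (n : ℕ) (hn : 2 ≤ n) :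
    (∀ x : Fin n → EuclideanSpace ℝ (Fin 2),
      steinerLength x = 0 ↔ ∀ i j : Fin n, x i = x j) ∧
    (∀ (x : Fin n → EuclideanSpace ℝ (Fin 2)) (σ : Equiv.Perm (Fin n)),
      steinerLength (x ∘ σ) = steinerLength x) ∧
    (∀ (x : Fin n → EuclideanSpace ℝ (Fin 2)) (z : EuclideanSpace ℝ (Fin 2)),
      steinerLength x ≤ ∑ i : Fin n, steinerLength (Function.update x i z)) := by
  refine ⟨?_, ?_, ?_⟩
  · -- part 1
    intro x
    constructor
    · intro h0 i j
      have h := dist_le_steiner x i j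
      rw [h0] at h
      exact dist_le_zero.mp h
    · intro hall
      refine le_antisymm ?_ (steiner_nonneg x)
      have i0 : Fin n := ⟨0, by omega⟩
      haveI : Nonempty (Fin (n + 0)) := ⟨⟨0, by omega⟩⟩
      have hzero : egLength (Fin.append x (Fin.elim0 : Fin 0 → EuclideanSpace ℝ (Fin 2))) ⊤ = 0 := by
        have hconst : ∀ w : Fin (n + 0), Fin.append x Fin.elim0 w = x i0 := by
          intro w
          refine Fin.addCases (fun i => ?_) (fun j => j.elim0) w
          rw [Fin.append_left]
          exact hall i i0
        exact egLength_eq_zero _ _ (fun u v _ => by rw [hconst u, hconst v])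
      calc steinerLength x ≤ mstLength (Fin.append x Fin.elim0) := steiner_le x Fin.elim0
        _ ≤ egLength (Fin.append x Fin.elim0) ⊤ := mstLength_le _ SimpleGraph.connected_top
        _ = 0 := hzero
  · -- part 2: symmetry
    intro x σ
    unfold steinerLength
    congr 1
    ext t
    constructor
    · rintro ⟨m, y, rfl⟩
      exact ⟨m, y, mst_append_perm x y σ⟩
    · rintro ⟨m, y, rfl⟩
      exact ⟨m, y, (mst_append_perm x y σ).symm⟩
  · -- part 3: simplex inequality
    intro x z
    refine le_of_forall_pos_le_add fun ε hε => ?_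
    have hnpos : (0 : ℝ) < n := by positivity
    have key : ∀ i : Fin n, ∃ (m : ℕ) (y : Fin m → EuclideanSpace ℝ (Fin 2)),
        Ok (Fin.append (Function.update x i z) y)
          (steinerLength (Function.update x i z) + ε / n) := by
      intro i
      set u := Function.update x i z with hu
      have hεn : (0 : ℝ) < ε / n / 2 := by positivity
      have h1 : steinerLength u < steinerLength u + ε / n / 2 := by linarith
      obtain ⟨t, htmem, ht⟩ := exists_lt_of_csInf_lt
        (⟨mstLength (Fin.append u Fin.elim0), 0, Fin.elim0, rfl⟩ :
          Set.Nonempty {t : ℝ | ∃ (m : ℕ) (y : Fin m → EuclideanSpace ℝ (Fin 2)),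
            t = mstLength (Fin.append u y)}) h1
      obtain ⟨m, y, rfl⟩ := htmem
      haveI : Nonempty (Fin (n + m)) := ⟨⟨0, by omega⟩⟩
      have h2 : mstLength (Fin.append u y) < steinerLength u + ε / n := by
        have : (0 : ℝ) < ε / n := by positivity
        linarith
      obtain ⟨t', ht'mem, ht'⟩ := exists_lt_of_csInf_lt
        (⟨egLength (Fin.append u y) ⊤, ⊤, SimpleGraph.connected_top, rfl⟩ :
          Set.Nonempty {t : ℝ | ∃ G : SimpleGraph (Fin (n + m)), G.Connected ∧
            t = egLength (Fin.append u y) G}) h2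
      obtain ⟨G, hG, rfl⟩ := ht'mem
      exact ⟨m, y, G, hG, ht'.le⟩
    choose m y hOk using key
    obtain ⟨b, q, hOkq, ⟨jz, hjz⟩, hcov⟩ := glue_family z (fun i => n + m i)
      (fun i => Fin.append (Function.update x i z) (y i))
      (fun i => steinerLength (Function.update x i z) + ε / n) Finset.univ
      (fun i _ => hOk i)
      (fun i _ => ⟨Fin.castAdd (m i) i, by
        show Fin.append (Function.update x i z) (y i) (Fin.castAdd (m i) i) = z
        rw [Fin.append_left, Function.update_self]⟩)
    have hcovx : ∀ k : Fin n, ∃ j, q j = x k := by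
      intro k
      haveI : Nontrivial (Fin n) := Fin.nontrivial_iff_two_le.mpr hn
      obtain ⟨i, hik⟩ := exists_ne k
      obtain ⟨j, hj⟩ := hcov i (Finset.mem_univ i) (Fin.castAdd (m i) k)
      refine ⟨j, ?_⟩
      rw [hj, Fin.append_left, Function.update_of_ne hik.symm]
    have hOkall : Ok (Fin.append x q)
        (∑ i : Fin n, (steinerLength (Function.update x i z) + ε / n)) :=
      Ok.attach hOkq hcovx
    have hfin := hOkall.steiner
    calc steinerLength x
        ≤ ∑ i : Fin n, (steinerLength (Function.update x i z) + ε / n) := hfin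
      _ = ∑ i : Fin n, steinerLength (Function.update x i z) + ε := by
          rw [Finset.sum_add_distrib, Finset.sum_const, Finset.card_univ, Fintype.card_fin,
            nsmul_eq_mul]
          congr 1
          field_simp
end

section
/- Define d : (ℝ²)^3 → ℝ by d(x1,x2,x3) = inf_{x ∈ ℝ²} (|x1 − x| + |x2 − x| + |x3 − x|) (the length of the Euclidean Steiner tree on the three points x1,x2,x3). Then the best constant of this 3-distance equals 1/2 and is attained: for all x1,x2,x3,z ∈ ℝ² one has d(x1,x2,x3) ≤ (1/2) · (d(z,x2,x3) + d(x1,z,x3) + d(x1,x2,z)), and equality holds whenever x1,x2,x3 are the vertices of an equilateral triangle (i.e., |x1 − x2| = |x2 − x3| = |x3 − x1| > 0) and z = (x1 + x2 + x3)/3 is its centroid. -/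
open scoped RealInnerProductSpace
set_option maxHeartbeats 1000000

noncomputable section

local notation "E" => EuclideanSpace ℝ (Fin 2)

lemma pert_bound (v s : E) (hv : v ≠ 0) (ε : ℝ) :
    ‖v - ε • s‖ ≤ ‖v‖ - ε * ⟪v, s⟫ / ‖v‖ + ε ^ 2 * ‖s‖ ^ 2 / (2 * ‖v‖) := by
  have hv0 : (0:ℝ) < ‖v‖ := norm_pos_iff.mpr hv
  have h2 : ‖v - ε • s‖ ^ 2 = ‖v‖ ^ 2 - 2 * (ε * ⟪v, s⟫) + ε ^ 2 * ‖s‖ ^ 2 := by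
    rw [norm_sub_sq_real, real_inner_smul_right, norm_smul]
    rw [mul_pow, Real.norm_eq_abs, sq_abs]
  have key : ‖v - ε • s‖ ≤ (2*‖v‖^2 - 2*(ε*⟪v, s⟫) + ε^2*‖s‖^2) / (2*‖v‖) := by
    rw [le_div_iff₀ (by positivity)]
    nlinarith [sq_nonneg (‖v - ε • s‖ - ‖v‖)]
  calc ‖v - ε • s‖ ≤ _ := key
    _ = ‖v‖ - ε * ⟪v, s⟫ / ‖v‖ + ε ^ 2 * ‖s‖ ^ 2 / (2 * ‖v‖) := by
        field_simp

lemma key_bound (a C : ℝ) (ha : 0 ≤ a) (hC : 0 ≤ C) (s : E)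
    (h : ∀ ε : ℝ, 0 < ε → 0 ≤ ε * (a * ‖s‖ - ‖s‖ ^ 2) + ε ^ 2 * C) : ‖s‖ ≤ a := by
  by_contra hlt
  push_neg at hlt
  have hs : 0 < ‖s‖ := lt_of_le_of_lt ha hlt
  set D : ℝ := ‖s‖ ^ 2 - a * ‖s‖ with hD
  have hDpos : 0 < D := by nlinarith
  have hε : 0 < D / (2 * C + 1) := by positivity
  have hh := h _ hε
  set ε := D / (2*C+1) with hεdef
  have hεC : ε * C < D := by
    rw [hεdef, div_mul_eq_mul_div, div_lt_iff₀ (by positivity)]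
    nlinarith
  have hrw : ε * (a * ‖s‖ - ‖s‖ ^ 2) = -(ε * D) := by rw [hD]; ring
  nlinarith [mul_lt_mul_of_pos_left hεC hε]

lemma exists_min (p1 p2 p3 : E) :
    ∃ m : E, ∀ x : E, dist p1 m + dist p2 m + dist p3 m ≤ dist p1 x + dist p2 x + dist p3 x := by
  have hcont : Continuous fun x : E => dist p1 x + dist p2 x + dist p3 x := by fun_prop
  have htend : Filter.Tendsto (fun x : E => dist p1 x + dist p2 x + dist p3 x)
      (Filter.cocompact E) Filter.atTop := by
    apply Filter.tendsto_atTop_mono (fun x => ?_)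
      (Filter.tendsto_atTop_add_const_right _ (-‖p1‖) tendsto_norm_cocompact_atTop)
    have h1 : ‖x‖ - ‖p1‖ ≤ dist p1 x := by
      rw [dist_comm, dist_eq_norm]; exact norm_sub_norm_le x p1
    have := dist_nonneg (x := p2) (y := x)
    have := dist_nonneg (x := p3) (y := x)
    linarith
  exact hcont.exists_forall_le htend


lemma dual_case0 (p1 p2 p3 m : E)
    (hmin : ∀ x : E, dist p1 m + dist p2 m + dist p3 m ≤ dist p1 x + dist p2 x + dist p3 x)
    (h1 : p1 ≠ m) (h2 : p2 ≠ m) (h3 : p3 ≠ m) :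
    ∃ u1 u2 u3 : E, u1 + u2 + u3 = 0 ∧ ‖u1‖ ≤ 1 ∧ ‖u2‖ ≤ 1 ∧ ‖u3‖ ≤ 1 ∧
      dist p1 m + dist p2 m + dist p3 m = ⟪u1, p1 - m⟫ + ⟪u2, p2 - m⟫ + ⟪u3, p3 - m⟫ := by
  set v1 := p1 - m with hv1
  set v2 := p2 - m with hv2
  set v3 := p3 - m with hv3
  have hv1' : v1 ≠ 0 := sub_ne_zero.mpr h1
  have hv2' : v2 ≠ 0 := sub_ne_zero.mpr h2
  have hv3' : v3 ≠ 0 := sub_ne_zero.mpr h3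
  have n1 : (0:ℝ) < ‖v1‖ := norm_pos_iff.mpr hv1'
  have n2 : (0:ℝ) < ‖v2‖ := norm_pos_iff.mpr hv2'
  have n3 : (0:ℝ) < ‖v3‖ := norm_pos_iff.mpr hv3'
  set w1 : E := ‖v1‖⁻¹ • v1 with hw1
  set w2 : E := ‖v2‖⁻¹ • v2 with hw2
  set w3 : E := ‖v3‖⁻¹ • v3 with hw3
  have hwn1 : ‖w1‖ = 1 := by rw [hw1, norm_smul, norm_inv, norm_norm, inv_mul_cancel₀ n1.ne']
  have hwn2 : ‖w2‖ = 1 := by rw [hw2, norm_smul, norm_inv, norm_norm, inv_mul_cancel₀ n2.ne']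
  have hwn3 : ‖w3‖ = 1 := by rw [hw3, norm_smul, norm_inv, norm_norm, inv_mul_cancel₀ n3.ne']
  have hiw1 : ⟪w1, v1⟫ = ‖v1‖ := by
    rw [hw1, real_inner_smul_left, real_inner_self_eq_norm_sq]
    field_simp
  have hiw2 : ⟪w2, v2⟫ = ‖v2‖ := by
    rw [hw2, real_inner_smul_left, real_inner_self_eq_norm_sq]
    field_simp
  have hiw3 : ⟪w3, v3⟫ = ‖v3‖ := by
    rw [hw3, real_inner_smul_left, real_inner_self_eq_norm_sq]
    field_simp
  set s : E := w1 + w2 + w3 with hs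
  have hinner_s : ⟪w1, s⟫ + ⟪w2, s⟫ + ⟪w3, s⟫ = ‖s‖ ^ 2 := by
    rw [← inner_add_left, ← inner_add_left, ← hs, real_inner_self_eq_norm_sq]
  have hdist1 : dist p1 m = ‖v1‖ := by rw [dist_eq_norm, hv1]
  have hdist2 : dist p2 m = ‖v2‖ := by rw [dist_eq_norm, hv2]
  have hdist3 : dist p3 m = ‖v3‖ := by rw [dist_eq_norm, hv3]
  have hC : (0:ℝ) ≤ ‖s‖^2/(2*‖v1‖) + ‖s‖^2/(2*‖v2‖) + ‖s‖^2/(2*‖v3‖) := by positivity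
  have hkey : ‖s‖ ≤ 0 := by
    apply key_bound 0 _ le_rfl hC s
    intro ε hε
    have hm := hmin (m + ε • s)
    have e1 : dist p1 (m + ε • s) = ‖v1 - ε • s‖ := by
      rw [dist_eq_norm, hv1]; congr 1; abel
    have e2 : dist p2 (m + ε • s) = ‖v2 - ε • s‖ := by
      rw [dist_eq_norm, hv2]; congr 1; abel
    have e3 : dist p3 (m + ε • s) = ‖v3 - ε • s‖ := by
      rw [dist_eq_norm, hv3]; congr 1; abel
    have b1 := pert_bound v1 s hv1' ε
    have b2 := pert_bound v2 s hv2' ε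
    have b3 := pert_bound v3 s hv3' ε
    have i1 : ε * ⟪v1, s⟫ / ‖v1‖ = ε * ⟪w1, s⟫ := by
      rw [hw1, real_inner_smul_left]; field_simp
    have i2 : ε * ⟪v2, s⟫ / ‖v2‖ = ε * ⟪w2, s⟫ := by
      rw [hw2, real_inner_smul_left]; field_simp
    have i3 : ε * ⟪v3, s⟫ / ‖v3‖ = ε * ⟪w3, s⟫ := by
      rw [hw3, real_inner_smul_left]; field_simp
    rw [e1, e2, e3, hdist1, hdist2, hdist3] at hm
    rw [i1] at b1; rw [i2] at b2; rw [i3] at b3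
    have expand : ε ^ 2 * ‖s‖ ^ 2 / (2 * ‖v1‖) + ε ^ 2 * ‖s‖ ^ 2 / (2 * ‖v2‖)
        + ε ^ 2 * ‖s‖ ^ 2 / (2 * ‖v3‖)
        = ε ^ 2 * (‖s‖^2/(2*‖v1‖) + ‖s‖^2/(2*‖v2‖) + ‖s‖^2/(2*‖v3‖)) := by ring
    have hmul : ε * ⟪w1, s⟫ + ε * ⟪w2, s⟫ + ε * ⟪w3, s⟫ = ε * ‖s‖^2 := by
      rw [← hinner_s]; ring
    have goal2 : (0:ℝ) ≤ ε * (0 * ‖s‖ - ‖s‖ ^ 2) + ε ^ 2 * (‖s‖^2/(2*‖v1‖) + ‖s‖^2/(2*‖v2‖) + ‖s‖^2/(2*‖v3‖)) := by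
      rw [zero_mul]
      linarith [hm, b1, b2, b3, hmul, expand]
    exact goal2
  have hs0 : s = 0 := norm_le_zero_iff.mp hkey
  refine ⟨w1, w2, w3, hs0, hwn1.le, hwn2.le, hwn3.le, ?_⟩
  rw [hiw1, hiw2, hiw3, hdist1, hdist2, hdist3]

lemma dual_case1 (p1 p2 p3 m : E)
    (hmin : ∀ x : E, dist p1 m + dist p2 m + dist p3 m ≤ dist p1 x + dist p2 x + dist p3 x)
    (h1 : p1 = m) (h2 : p2 ≠ m) (h3 : p3 ≠ m) :
    ∃ u1 u2 u3 : E, u1 + u2 + u3 = 0 ∧ ‖u1‖ ≤ 1 ∧ ‖u2‖ ≤ 1 ∧ ‖u3‖ ≤ 1 ∧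
      dist p1 m + dist p2 m + dist p3 m = ⟪u1, p1 - m⟫ + ⟪u2, p2 - m⟫ + ⟪u3, p3 - m⟫ := by
  set v2 := p2 - m with hv2
  set v3 := p3 - m with hv3
  have hv2' : v2 ≠ 0 := sub_ne_zero.mpr h2
  have hv3' : v3 ≠ 0 := sub_ne_zero.mpr h3
  have n2 : (0:ℝ) < ‖v2‖ := norm_pos_iff.mpr hv2'
  have n3 : (0:ℝ) < ‖v3‖ := norm_pos_iff.mpr hv3'
  set w2 : E := ‖v2‖⁻¹ • v2 with hw2
  set w3 : E := ‖v3‖⁻¹ • v3 with hw3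
  have hwn2 : ‖w2‖ = 1 := by rw [hw2, norm_smul, norm_inv, norm_norm, inv_mul_cancel₀ n2.ne']
  have hwn3 : ‖w3‖ = 1 := by rw [hw3, norm_smul, norm_inv, norm_norm, inv_mul_cancel₀ n3.ne']
  have hiw2 : ⟪w2, v2⟫ = ‖v2‖ := by
    rw [hw2, real_inner_smul_left, real_inner_self_eq_norm_sq]
    field_simp
  have hiw3 : ⟪w3, v3⟫ = ‖v3‖ := by
    rw [hw3, real_inner_smul_left, real_inner_self_eq_norm_sq]
    field_simp
  set s : E := w2 + w3 with hs
  have hinner_s : ⟪w2, s⟫ + ⟪w3, s⟫ = ‖s‖ ^ 2 := by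
    rw [← inner_add_left, ← hs, real_inner_self_eq_norm_sq]
  have hdist1 : dist p1 m = 0 := by rw [h1, dist_self]
  have hdist2 : dist p2 m = ‖v2‖ := by rw [dist_eq_norm, hv2]
  have hdist3 : dist p3 m = ‖v3‖ := by rw [dist_eq_norm, hv3]
  have hC : (0:ℝ) ≤ ‖s‖^2/(2*‖v2‖) + ‖s‖^2/(2*‖v3‖) := by positivity
  have hkey : ‖s‖ ≤ 1 := by
    apply key_bound 1 _ zero_le_one hC s
    intro ε hε
    have hm := hmin (m + ε • s)
    have e1 : dist p1 (m + ε • s) = ε * ‖s‖ := by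
      rw [h1, dist_eq_norm]
      have : m - (m + ε • s) = (-ε) • s := by
        rw [neg_smul]; abel
      rw [this, norm_smul, Real.norm_eq_abs, abs_of_neg (neg_neg_iff_pos.mpr hε), neg_neg]
    have e2 : dist p2 (m + ε • s) = ‖v2 - ε • s‖ := by
      rw [dist_eq_norm, hv2]; congr 1; abel
    have e3 : dist p3 (m + ε • s) = ‖v3 - ε • s‖ := by
      rw [dist_eq_norm, hv3]; congr 1; abel
    have b2 := pert_bound v2 s hv2' ε
    have b3 := pert_bound v3 s hv3' ε
    have i2 : ε * ⟪v2, s⟫ / ‖v2‖ = ε * ⟪w2, s⟫ := by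
      rw [hw2, real_inner_smul_left]; field_simp
    have i3 : ε * ⟪v3, s⟫ / ‖v3‖ = ε * ⟪w3, s⟫ := by
      rw [hw3, real_inner_smul_left]; field_simp
    rw [e1, e2, e3, hdist1, hdist2, hdist3] at hm
    rw [i2] at b2; rw [i3] at b3
    have expand : ε ^ 2 * ‖s‖ ^ 2 / (2 * ‖v2‖) + ε ^ 2 * ‖s‖ ^ 2 / (2 * ‖v3‖)
        = ε ^ 2 * (‖s‖^2/(2*‖v2‖) + ‖s‖^2/(2*‖v3‖)) := by ring
    have hmul : ε * ⟪w2, s⟫ + ε * ⟪w3, s⟫ = ε * ‖s‖^2 := by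
      rw [← hinner_s]; ring
    have goal2 : (0:ℝ) ≤ ε * (1 * ‖s‖ - ‖s‖ ^ 2)
        + ε ^ 2 * (‖s‖^2/(2*‖v2‖) + ‖s‖^2/(2*‖v3‖)) := by
      rw [one_mul]
      have hexp : ε * (‖s‖ - ‖s‖ ^ 2) = ε * ‖s‖ - ε * ‖s‖^2 := by ring
      linarith [hm, b2, b3, hmul, expand, hexp]
    exact goal2
  refine ⟨-s, w2, w3, by rw [hs]; abel, by rw [norm_neg]; exact hkey, hwn2.le, hwn3.le, ?_⟩
  have hz : p1 - m = 0 := sub_eq_zero.mpr h1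
  rw [hz, inner_zero_right, hiw2, hiw3, hdist1, hdist2, hdist3]

lemma dual_case2 (p1 p2 p3 m : E)
    (h1 : p1 = m) (h2 : p2 = m) (h3 : p3 ≠ m) :
    ∃ u1 u2 u3 : E, u1 + u2 + u3 = 0 ∧ ‖u1‖ ≤ 1 ∧ ‖u2‖ ≤ 1 ∧ ‖u3‖ ≤ 1 ∧
      dist p1 m + dist p2 m + dist p3 m = ⟪u1, p1 - m⟫ + ⟪u2, p2 - m⟫ + ⟪u3, p3 - m⟫ := by
  set v3 := p3 - m with hv3
  have hv3' : v3 ≠ 0 := sub_ne_zero.mpr h3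
  have n3 : (0:ℝ) < ‖v3‖ := norm_pos_iff.mpr hv3'
  set w3 : E := ‖v3‖⁻¹ • v3 with hw3
  have hwn3 : ‖w3‖ = 1 := by rw [hw3, norm_smul, norm_inv, norm_norm, inv_mul_cancel₀ n3.ne']
  have hiw3 : ⟪w3, v3⟫ = ‖v3‖ := by
    rw [hw3, real_inner_smul_left, real_inner_self_eq_norm_sq]
    field_simp
  refine ⟨-w3, 0, w3, by abel, by rw [norm_neg, hwn3], by simp, hwn3.le, ?_⟩
  have hz1 : p1 - m = 0 := sub_eq_zero.mpr h1
  rw [hz1, inner_zero_right, inner_zero_left, hiw3, h1, h2, dist_self,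
    dist_eq_norm, ← hv3]

lemma dual_case3 (p1 p2 p3 m : E)
    (h1 : p1 = m) (h2 : p2 = m) (h3 : p3 = m) :
    ∃ u1 u2 u3 : E, u1 + u2 + u3 = 0 ∧ ‖u1‖ ≤ 1 ∧ ‖u2‖ ≤ 1 ∧ ‖u3‖ ≤ 1 ∧
      dist p1 m + dist p2 m + dist p3 m = ⟪u1, p1 - m⟫ + ⟪u2, p2 - m⟫ + ⟪u3, p3 - m⟫ := by
  refine ⟨0, 0, 0, by abel, by simp, by simp, by simp, ?_⟩
  rw [h1, h2, h3, dist_self]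
  simp

lemma exists_dual (p1 p2 p3 : E) :
    ∃ u1 u2 u3 : E, u1 + u2 + u3 = 0 ∧ ‖u1‖ ≤ 1 ∧ ‖u2‖ ≤ 1 ∧ ‖u3‖ ≤ 1 ∧
      ∃ m : E, dist p1 m + dist p2 m + dist p3 m
        = ⟪u1, p1 - m⟫ + ⟪u2, p2 - m⟫ + ⟪u3, p3 - m⟫ := by
  obtain ⟨m, hm⟩ := exists_min p1 p2 p3
  by_cases h1 : p1 = m <;> by_cases h2 : p2 = m <;> by_cases h3 : p3 = m
  · obtain ⟨u1,u2,u3,hs,n1,n2,n3,he⟩ := dual_case3 p1 p2 p3 m h1 h2 h3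
    exact ⟨u1,u2,u3,hs,n1,n2,n3,m,he⟩
  · obtain ⟨u1,u2,u3,hs,n1,n2,n3,he⟩ := dual_case2 p1 p2 p3 m h1 h2 h3
    exact ⟨u1,u2,u3,hs,n1,n2,n3,m,he⟩
  · obtain ⟨a,b,c,hs,n1,n2,n3,he⟩ := dual_case2 p1 p3 p2 m h1 h3 h2
    exact ⟨a,c,b, by rw [show a + c + b = a + b + c from by abel]; exact hs,
      n1,n3,n2, m, by linarith [he]⟩
  · obtain ⟨u1,u2,u3,hs,n1,n2,n3,he⟩ := dual_case1 p1 p2 p3 m hm h1 h2 h3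
    exact ⟨u1,u2,u3,hs,n1,n2,n3,m,he⟩
  · obtain ⟨b,a,c,hs,n2,n1,n3,he⟩ := dual_case2 p2 p3 p1 m h2 h3 h1
    exact ⟨c,b,a, by rw [show c + b + a = b + a + c from by abel]; exact hs,
      n3,n2,n1, m, by linarith [he]⟩
  · obtain ⟨a,b,c,hs,n1,n2,n3,he⟩ := dual_case1 p2 p1 p3 m (fun x => by linarith [hm x]) h2 h1 h3
    exact ⟨b,a,c, by rw [show b + a + c = a + b + c from by abel]; exact hs,
      n2,n1,n3, m, by linarith [he]⟩
  · obtain ⟨a,b,c,hs,n1,n2,n3,he⟩ := dual_case1 p3 p1 p2 m (fun x => by linarith [hm x]) h3 h1 h2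
    exact ⟨b,c,a, by rw [show b + c + a = a + b + c from by abel]; exact hs,
      n2,n3,n1, m, by linarith [he]⟩
  · obtain ⟨u1,u2,u3,hs,n1,n2,n3,he⟩ := dual_case0 p1 p2 p3 m hm h1 h2 h3
    exact ⟨u1,u2,u3,hs,n1,n2,n3,m,he⟩

lemma S_nonempty (q1 q2 q3 : E) :
    Set.Nonempty {t : ℝ | ∃ x : E, t = dist q1 x + dist q2 x + dist q3 x} :=
  ⟨_, ⟨q1, rfl⟩⟩

lemma S_bdd (q1 q2 q3 : E) :
    BddBelow {t : ℝ | ∃ x : E, t = dist q1 x + dist q2 x + dist q3 x} := by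
  refine ⟨0, fun t ht => ?_⟩
  obtain ⟨x, rfl⟩ := ht
  have := dist_nonneg (x := q1) (y := x)
  have := dist_nonneg (x := q2) (y := x)
  have := dist_nonneg (x := q3) (y := x)
  linarith

lemma weak_dual (u1 u2 u3 q1 q2 q3 : E) (hsum : u1 + u2 + u3 = 0)
    (n1 : ‖u1‖ ≤ 1) (n2 : ‖u2‖ ≤ 1) (n3 : ‖u3‖ ≤ 1) :
    ⟪u1, q1⟫ + ⟪u2, q2⟫ + ⟪u3, q3⟫ ≤
      sInf {t : ℝ | ∃ x : E, t = dist q1 x + dist q2 x + dist q3 x} := by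
  apply le_csInf (S_nonempty q1 q2 q3)
  rintro t ⟨x, rfl⟩
  have key : ∀ (u q : E), ‖u‖ ≤ 1 → ⟪u, q - x⟫ ≤ dist q x := by
    intro u q hu
    calc ⟪u, q - x⟫ ≤ ‖u‖ * ‖q - x‖ := real_inner_le_norm _ _
      _ ≤ 1 * ‖q - x‖ := mul_le_mul_of_nonneg_right hu (norm_nonneg _)
      _ = dist q x := by rw [one_mul, dist_eq_norm]
  have hz : ⟪u1, x⟫ + ⟪u2, x⟫ + ⟪u3, x⟫ = 0 := by
    rw [← inner_add_left, ← inner_add_left, hsum, inner_zero_left]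
  have e1 : ⟪u1, q1⟫ = ⟪u1, q1 - x⟫ + ⟪u1, x⟫ := by rw [inner_sub_right]; ring
  have e2 : ⟪u2, q2⟫ = ⟪u2, q2 - x⟫ + ⟪u2, x⟫ := by rw [inner_sub_right]; ring
  have e3 : ⟪u3, q3⟫ = ⟪u3, q3 - x⟫ + ⟪u3, x⟫ := by rw [inner_sub_right]; ring
  linarith [key u1 q1 n1, key u2 q2 n2, key u3 q3 n3]

lemma strong_dual (p1 p2 p3 : E) :
    ∃ u1 u2 u3 : E, u1 + u2 + u3 = 0 ∧ ‖u1‖ ≤ 1 ∧ ‖u2‖ ≤ 1 ∧ ‖u3‖ ≤ 1 ∧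
      sInf {t : ℝ | ∃ x : E, t = dist p1 x + dist p2 x + dist p3 x}
        ≤ ⟪u1, p1⟫ + ⟪u2, p2⟫ + ⟪u3, p3⟫ := by
  obtain ⟨u1,u2,u3,hsum,n1,n2,n3,m,hm⟩ := exists_dual p1 p2 p3
  refine ⟨u1,u2,u3,hsum,n1,n2,n3, ?_⟩
  have hmem : dist p1 m + dist p2 m + dist p3 m ∈
      {t : ℝ | ∃ x : E, t = dist p1 x + dist p2 x + dist p3 x} := ⟨m, rfl⟩
  have hle := csInf_le (S_bdd p1 p2 p3) hmem
  have hz : ⟪u1, m⟫ + ⟪u2, m⟫ + ⟪u3, m⟫ = 0 := by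
    rw [← inner_add_left, ← inner_add_left, hsum, inner_zero_left]
  have e1 : ⟪u1, p1 - m⟫ = ⟪u1, p1⟫ - ⟪u1, m⟫ := inner_sub_right _ _ _
  have e2 : ⟪u2, p2 - m⟫ = ⟪u2, p2⟫ - ⟪u2, m⟫ := inner_sub_right _ _ _
  have e3 : ⟪u3, p3 - m⟫ = ⟪u3, p3⟫ - ⟪u3, m⟫ := inner_sub_right _ _ _
  linarith

/-- For the `3`-distance on `ℝ²` defined by
`d(x₁,x₂,x₃) = inf_{x ∈ ℝ²} (|x₁−x| + |x₂−x| + |x₃−x|)` (the Euclidean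
Steiner tree length on three points), the best constant equals `1/2` and is
attained: the simplex inequality holds with constant `1/2`, and equality
holds whenever `x₁,x₂,x₃` form an equilateral triangle and `z` is its
centroid. -/
theorem steiner3_best_constant
    (d : EuclideanSpace ℝ (Fin 2) → EuclideanSpace ℝ (Fin 2) →
      EuclideanSpace ℝ (Fin 2) → ℝ)
    (hd : ∀ x₁ x₂ x₃ : EuclideanSpace ℝ (Fin 2),
      d x₁ x₂ x₃ = sInf {t : ℝ | ∃ x : EuclideanSpace ℝ (Fin 2),
        t = dist x₁ x + dist x₂ x + dist x₃ x}) :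
    (∀ x₁ x₂ x₃ z : EuclideanSpace ℝ (Fin 2),
      d x₁ x₂ x₃ ≤ (1 / 2) * (d z x₂ x₃ + d x₁ z x₃ + d x₁ x₂ z)) ∧
    (∀ x₁ x₂ x₃ z : EuclideanSpace ℝ (Fin 2),
      dist x₁ x₂ = dist x₂ x₃ → dist x₂ x₃ = dist x₃ x₁ → 0 < dist x₁ x₂ →
      z = (3 : ℝ)⁻¹ • (x₁ + x₂ + x₃) →
      d x₁ x₂ x₃ = (1 / 2) * (d z x₂ x₃ + d x₁ z x₃ + d x₁ x₂ z)) := by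
  have hineq : ∀ x₁ x₂ x₃ z : E,
      d x₁ x₂ x₃ ≤ (1 / 2) * (d z x₂ x₃ + d x₁ z x₃ + d x₁ x₂ z) := by
    intro x1 x2 x3 z
    obtain ⟨u1,u2,u3,hsum,n1,n2,n3,hstrong⟩ := strong_dual x1 x2 x3
    have w1 := weak_dual u1 u2 u3 z x2 x3 hsum n1 n2 n3
    have w2 := weak_dual u1 u2 u3 x1 z x3 hsum n1 n2 n3
    have w3 := weak_dual u1 u2 u3 x1 x2 z hsum n1 n2 n3
    have hz : ⟪u1, z⟫ + ⟪u2, z⟫ + ⟪u3, z⟫ = 0 := by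
      rw [← inner_add_left, ← inner_add_left, hsum, inner_zero_left]
    rw [hd x1 x2 x3, hd z x2 x3, hd x1 z x3, hd x1 x2 z] at *
    linarith
  refine ⟨hineq, ?_⟩
  intro x1 x2 x3 z he1 he2 hpos hzc
  set a := x1 - z with ha
  set b := x2 - z with hb
  set c := x3 - z with hc
  have h3z : x1 + x2 + x3 = z + z + z := by
    rw [hzc, ← add_smul, ← add_smul, show (3:ℝ)⁻¹ + 3⁻¹ + 3⁻¹ = 1 by norm_num, one_smul]
  have habc : a + b + c = 0 := by
    have h : a + b + c = (x1 + x2 + x3) - (z + z + z) := by rw [ha, hb, hc]; abel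
    rw [h, h3z, sub_self]
  have s12 : dist x1 x2 = ‖a - b‖ := by
    rw [dist_eq_norm]; congr 1; rw [ha, hb]; abel
  have s23 : dist x2 x3 = ‖b - c‖ := by
    rw [dist_eq_norm]; congr 1; rw [hb, hc]; abel
  have s31 : dist x3 x1 = ‖c - a‖ := by
    rw [dist_eq_norm]; congr 1; rw [hc, ha]; abel
  have E1 : dist x1 x2 ^ 2 = ‖a‖^2 - 2*⟪a,b⟫ + ‖b‖^2 := by rw [s12, norm_sub_sq_real]
  have E2 : dist x2 x3 ^ 2 = ‖b‖^2 - 2*⟪b,c⟫ + ‖c‖^2 := by rw [s23, norm_sub_sq_real]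
  have E3 : dist x3 x1 ^ 2 = ‖c‖^2 - 2*⟪c,a⟫ + ‖a‖^2 := by rw [s31, norm_sub_sq_real]
  have Zgen : ∀ w : E, ⟪a, w⟫ + ⟪b, w⟫ + ⟪c, w⟫ = 0 := by
    intro w
    rw [← inner_add_left, ← inner_add_left, habc, inner_zero_left]
  have Z1 : ‖a‖^2 + ⟪a,b⟫ + ⟪c,a⟫ = 0 := by
    have h := Zgen a
    rw [real_inner_self_eq_norm_sq] at h
    linarith [real_inner_comm a b]
  have Z2 : ⟪a,b⟫ + ‖b‖^2 + ⟪b,c⟫ = 0 := by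
    have h := Zgen b
    rw [real_inner_self_eq_norm_sq] at h
    linarith [real_inner_comm a b, real_inner_comm b c]
  have Z3 : ⟪c,a⟫ + ⟪b,c⟫ + ‖c‖^2 = 0 := by
    have h := Zgen c
    rw [real_inner_self_eq_norm_sq] at h
    linarith [real_inner_comm c a, real_inner_comm b c]
  have he1' : dist x1 x2 ^ 2 = dist x2 x3 ^ 2 := by rw [he1]
  have he2' : dist x2 x3 ^ 2 = dist x3 x1 ^ 2 := by rw [he2]
  have hspos : (0:ℝ) < dist x1 x2 ^ 2 := by positivity
  have hnab : ‖a‖^2 = ‖b‖^2 := by linarith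
  have hnbc : ‖b‖^2 = ‖c‖^2 := by linarith
  have hb3 : dist x1 x2 ^ 2 = 3 * ‖b‖^2 := by linarith
  have hbpos : (0:ℝ) < ‖b‖ := by
    have h2 : (0:ℝ) < ‖b‖^2 := by linarith
    nlinarith [norm_nonneg b]
  have hab : ‖a‖ = ‖b‖ := by nlinarith [norm_nonneg a, norm_nonneg b]
  have hcb : ‖c‖ = ‖b‖ := by nlinarith [norm_nonneg c, norm_nonneg b]
  set c0 := ‖b‖ with hc0
  have d1z : dist x1 z = c0 := by rw [dist_eq_norm, ← ha, hab]
  have d2z : dist x2 z = c0 := by rw [dist_eq_norm, ← hb]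
  have d3z : dist x3 z = c0 := by rw [dist_eq_norm, ← hc, hcb]
  -- dual vectors
  set u1 : E := c0⁻¹ • a with hu1
  set u2 : E := c0⁻¹ • b with hu2
  set u3 : E := c0⁻¹ • c with hu3
  have hsum : u1 + u2 + u3 = 0 := by
    rw [hu1, hu2, hu3, ← smul_add, ← smul_add, habc, smul_zero]
  have nu1 : ‖u1‖ ≤ 1 := by
    rw [hu1, norm_smul, norm_inv, Real.norm_eq_abs, abs_of_pos hbpos, hab]
    rw [inv_mul_cancel₀ hbpos.ne']
  have nu2 : ‖u2‖ ≤ 1 := by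
    rw [hu2, norm_smul, norm_inv, Real.norm_eq_abs, abs_of_pos hbpos,
      inv_mul_cancel₀ hbpos.ne']
  have nu3 : ‖u3‖ ≤ 1 := by
    rw [hu3, norm_smul, norm_inv, Real.norm_eq_abs, abs_of_pos hbpos, hcb,
      inv_mul_cancel₀ hbpos.ne']
  -- lower bound for d x1 x2 x3
  have hzin : ⟪u1, z⟫ + ⟪u2, z⟫ + ⟪u3, z⟫ = 0 := by
    rw [← inner_add_left, ← inner_add_left, hsum, inner_zero_left]
  have i1 : ⟪u1, x1⟫ = ⟪u1, a⟫ + ⟪u1, z⟫ := by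
    rw [← inner_add_right]; congr 1; rw [ha]; abel
  have i2 : ⟪u2, x2⟫ = ⟪u2, b⟫ + ⟪u2, z⟫ := by
    rw [← inner_add_right]; congr 1; rw [hb]; abel
  have i3 : ⟪u3, x3⟫ = ⟪u3, c⟫ + ⟪u3, z⟫ := by
    rw [← inner_add_right]; congr 1; rw [hc]; abel
  have j1 : ⟪u1, a⟫ = c0 := by
    rw [hu1, real_inner_smul_left, real_inner_self_eq_norm_sq, hab]
    field_simp
  have j2 : ⟪u2, b⟫ = c0 := by
    rw [hu2, real_inner_smul_left, real_inner_self_eq_norm_sq]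
    field_simp
    rw [← hc0]
  have j3 : ⟪u3, c⟫ = c0 := by
    rw [hu3, real_inner_smul_left, real_inner_self_eq_norm_sq, hcb]
    field_simp
  have hlow : 3 * c0 ≤ d x1 x2 x3 := by
    have hw := weak_dual u1 u2 u3 x1 x2 x3 hsum nu1 nu2 nu3
    rw [hd x1 x2 x3]
    rw [i1, i2, i3, j1, j2, j3] at hw
    linarith
  -- upper bounds for the three RHS terms
  have hup1 : d z x2 x3 ≤ 2 * c0 := by
    rw [hd z x2 x3]
    have hmem : dist z z + dist x2 z + dist x3 z ∈
        {t : ℝ | ∃ x : E, t = dist z x + dist x2 x + dist x3 x} := ⟨z, rfl⟩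
    have := csInf_le (S_bdd z x2 x3) hmem
    rw [dist_self, d2z, d3z] at this
    linarith
  have hup2 : d x1 z x3 ≤ 2 * c0 := by
    rw [hd x1 z x3]
    have hmem : dist x1 z + dist z z + dist x3 z ∈
        {t : ℝ | ∃ x : E, t = dist x1 x + dist z x + dist x3 x} := ⟨z, rfl⟩
    have := csInf_le (S_bdd x1 z x3) hmem
    rw [dist_self, d1z, d3z] at this
    linarith
  have hup3 : d x1 x2 z ≤ 2 * c0 := by
    rw [hd x1 x2 z]
    have hmem : dist x1 z + dist x2 z + dist z z ∈
        {t : ℝ | ∃ x : E, t = dist x1 x + dist x2 x + dist z x} := ⟨z, rfl⟩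
    have := csInf_le (S_bdd x1 x2 z) hmem
    rw [dist_self, d1z, d2z] at this
    linarith
  have hmain := hineq x1 x2 x3 z
  linarith
end
end
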